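/- arXiv:2505.14389 — 9 statements merged into one kernel-verified Lean document; each statement's English description precedes it below -/
import Mathlib

section
/- Let (x_k)_{k≥0} be the sequence generated by Algorithm 1, let x* be a solution of (P), λ > 1, γ ≥ 0, t_k := θ(k + γ), Ψ_k := F + ε_k H, and define E_k^λ := t_k (Ψ_{k−1}(x_k) − Ψ_{k−1}(x*)) + (λ/2)‖x_k − x*‖² for k ≥ 1. Then there exists k_0 ≥ 1 such that for all k ≥ k_0: E_{k+1}^λ − E_k^λ + ζ_{k,δ} (H(x_k) − H(x*)) ≤ −θ(λ−1)(F(x_k) − F(x*)), where ζ_{k,δ} := θ(λ−1)ε_k − t_k(ε_k − ε_{k−1}). -/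
open Filter Topology Metric MeasureTheory Asymptotics
open scoped Pointwise RealInnerProductSpace ENNReal NNReal

noncomputable section

variable {E : Type*} [NormedAddCommGroup E] [InnerProductSpace ℝ E] [CompleteSpace E]

/-- Convexity for an `EReal`-valued function. -/
def ERealConvexOn (g : E → EReal) : Prop :=
  ∀ x y : E, ∀ a b : ℝ, 0 ≤ a → 0 ≤ b → a + b = 1 →
    g (a • x + b • y) ≤ (a : EReal) * g x + (b : EReal) * g y

/-- Properness for a function with values in `ℝ ∪ {+∞}` (modelled in `EReal`):
it never takes the value `⊥` and is somewhere finite. -/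
def ERealProper (g : E → EReal) : Prop :=
  (∀ x, g x ≠ ⊥) ∧ ∃ x, g x ≠ ⊤

/-- Set of global minimizers of an `EReal`-valued function. -/
def argminSet (g : E → EReal) : Set E := {x | ∀ y, g x ≤ g y}

/-- Set of global minimizers of a real-valued function. -/
def argminSetR (g : E → ℝ) : Set E := {x | ∀ y, g x ≤ g y}

/-- `IsProx s g v z` means `z = prox_{s g}(v)`, i.e. `z` minimizes
`y ↦ g y + ‖y - v‖² / (2 s)`. -/
def IsProx (s : ℝ) (g : E → EReal) (v z : E) : Prop :=
  ∀ y : E, g z + ((‖z - v‖ ^ 2 / (2 * s) : ℝ) : EReal) ≤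
    g y + ((‖y - v‖ ^ 2 / (2 * s) : ℝ) : EReal)

/-- Normal cone to a convex set `C` at `x`. -/
def normalCone (C : Set E) (x : E) : Set E := {p | ∀ y ∈ C, ⟪p, y - x⟫ ≤ 0}

/-- Convex subdifferential of an `EReal`-valued function. -/
def ERealSubdiff (g : E → EReal) (x : E) : Set E :=
  {p | ∀ y, g x + ((⟪p, y - x⟫ : ℝ) : EReal) ≤ g y}

open Classical in
/-- Indicator function of `C` with values in `EReal`. -/
def indicatorE (C : Set E) : E → EReal := fun x => if x ∈ C then 0 else ⊤

/-- Fenchel--Moreau conjugate `g*(z) = sup_x ⟨x, z⟩ - g x`. -/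
def fenchel (g : E → EReal) (z : E) : EReal := ⨆ x : E, ((⟪x, z⟫ : ℝ) : EReal) - g x

/-- Support function of a set `C`. -/
def suppFn (C : Set E) (z : E) : EReal := ⨆ x ∈ C, ((⟪x, z⟫ : ℝ) : EReal)

/-- Solutions of the bilevel problem: minimizers of `H` over `argmin F`. -/
def BilevelSol (F H : E → EReal) : Set E :=
  {x | x ∈ argminSet F ∧ ∀ y ∈ argminSet F, H x ≤ H y}

/-- Solutions of the smooth bilevel problem: minimizers of `h` over `argmin f`. -/
def BilevelSolR (f h : E → ℝ) : Set E :=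
  {x | x ∈ argminSetR f ∧ ∀ y ∈ argminSetR f, h x ≤ h y}

open Classical in
/-- Conversion `EReal → ℝ≥0∞` (sending `⊤` to `⊤` and nonpositive values to `0`). -/
def erealToENNReal (a : EReal) : ℝ≥0∞ := if a = ⊤ then ⊤ else ENNReal.ofReal a.toReal



lemma coe_mul_ne_bot' (r : ℝ) (hr : 0 < r) (z : EReal) (hz : z ≠ ⊥) : (r : EReal) * z ≠ ⊥ := by
  induction z with
  | bot => exact absurd rfl hz
  | coe a => rw [← EReal.coe_mul]; exact EReal.coe_ne_bot _
  | top => rw [EReal.coe_mul_top_of_pos hr]; simp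

lemma lineDeriv_aux (φ : E → ℝ) (φ' : E → E) (hφ : ∀ z, HasGradientAt φ (φ' z) z)
    (v d : E) (τ : ℝ) :
    HasDerivAt (fun s : ℝ => φ (v + s • d)) ⟪φ' (v + τ • d), d⟫ τ := by
  have hc : HasDerivAt (fun s : ℝ => v + s • d) d τ := by
    simpa using ((hasDerivAt_id τ).smul_const d).const_add v
  have hg := (hasGradientAt_iff_hasFDerivAt.mp (hφ (v + τ • d)))
  have := hg.comp_hasDerivAt τ hc
  simp only [InnerProductSpace.toDual_apply_apply] at this
  exact this

lemma descent_aux (φ : E → ℝ) (φ' : E → E) (L : ℝ)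
    (hφ : ∀ z, HasGradientAt φ (φ' z) z)
    (hlip : ∀ a b : E, ‖φ' a - φ' b‖ ≤ L * ‖a - b‖) (v w : E) :
    φ w ≤ φ v + ⟪φ' v, w - v⟫ + L / 2 * ‖w - v‖ ^ 2 := by
  set d := w - v with hd
  set χ : ℝ → ℝ := fun s => φ (v + s • d) - s * ⟪φ' v, d⟫ - L / 2 * ‖d‖ ^ 2 * s ^ 2 with hχ
  have hder : ∀ τ : ℝ, HasDerivAt χ
      (⟪φ' (v + τ • d), d⟫ - ⟪φ' v, d⟫ - L / 2 * ‖d‖ ^ 2 * (2 * τ)) τ := by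
    intro τ
    have h1 := lineDeriv_aux φ φ' hφ v d τ
    have h2 : HasDerivAt (fun s : ℝ => s * ⟪φ' v, d⟫) ⟪φ' v, d⟫ τ := by
      simpa using (hasDerivAt_id τ).mul_const ⟪φ' v, d⟫
    have h3 : HasDerivAt (fun s : ℝ => L / 2 * ‖d‖ ^ 2 * s ^ 2)
        (L / 2 * ‖d‖ ^ 2 * (2 * τ)) τ := by
      have := (hasDerivAt_pow 2 τ).const_mul (L / 2 * ‖d‖ ^ 2)
      simpa using this
    exact (h1.sub h2).sub h3
  have hanti : AntitoneOn χ (Set.Icc (0:ℝ) 1) := by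
    apply antitoneOn_of_deriv_nonpos (convex_Icc 0 1)
    · exact fun s _ => ((hder s).continuousAt.continuousWithinAt)
    · intro s hs
      exact ((hder s).differentiableAt.differentiableWithinAt)
    · intro s hs
      rw [interior_Icc] at hs
      rw [(hder s).deriv]
      have h4 : ⟪φ' (v + s • d) - φ' v, d⟫ ≤ ‖φ' (v + s • d) - φ' v‖ * ‖d‖ :=
        real_inner_le_norm _ _
      have h5 : ‖φ' (v + s • d) - φ' v‖ ≤ L * ‖s • d‖ := by
        simpa using hlip (v + s • d) v
      have h6 : ‖s • d‖ = s * ‖d‖ := by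
        rw [norm_smul, Real.norm_eq_abs, abs_of_pos hs.1]
      have h7 : ⟪φ' (v + s • d) - φ' v, d⟫ = ⟪φ' (v + s • d), d⟫ - ⟪φ' v, d⟫ :=
        inner_sub_left _ _ _
      rw [h6] at h5
      have h8 := mul_le_mul_of_nonneg_right h5 (norm_nonneg d)
      nlinarith [norm_nonneg d, hs.1.le]
  have h01 := hanti (by norm_num : (0:ℝ) ∈ Set.Icc (0:ℝ) 1)
    (by norm_num : (1:ℝ) ∈ Set.Icc (0:ℝ) 1) zero_le_one
  have e0 : χ 0 = φ v := by simp [hχ]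
  have e1 : χ 1 = φ w - ⟪φ' v, d⟫ - L / 2 * ‖d‖ ^ 2 := by
    simp [hχ, hd]
  rw [e0, e1] at h01
  linarith

lemma convexGrad_aux (φ : E → ℝ) (φ' : E → E) (hconv : ConvexOn ℝ Set.univ φ)
    (hφ : ∀ z, HasGradientAt φ (φ' z) z) (v u : E) :
    φ v + ⟪φ' v, u - v⟫ ≤ φ u := by
  set d := u - v with hd
  set ψ : ℝ → ℝ := fun s => φ (v + s • d) with hψ
  have hψconv : ConvexOn ℝ Set.univ ψ := by
    have haff : ConvexOn ℝ ((AffineMap.lineMap v u : ℝ →ᵃ[ℝ] E) ⁻¹' Set.univ)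
        (φ ∘ (AffineMap.lineMap v u : ℝ →ᵃ[ℝ] E)) :=
      hconv.comp_affineMap _
    have : ((AffineMap.lineMap v u : ℝ →ᵃ[ℝ] E) ⁻¹' Set.univ) = Set.univ := by simp
    rw [this] at haff
    convert haff using 1
    funext s
    show φ (v + s • d) = φ (AffineMap.lineMap v u s)
    rw [AffineMap.lineMap_apply_module, hd]
    exact congrArg φ (by module)
  have hder : HasDerivAt ψ ⟪φ' v, d⟫ 0 := by
    have := lineDeriv_aux φ φ' hφ v d 0
    simpa using this
  have hslope := hψconv.deriv_le_slope (Set.mem_univ (0:ℝ)) (Set.mem_univ (1:ℝ))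
    zero_lt_one hder.differentiableAt
  rw [hder.deriv] at hslope
  have : slope ψ 0 1 = ψ 1 - ψ 0 := by simp [slope_def_field]
  rw [this] at hslope
  have e0 : ψ 0 = φ v := by simp [hψ]
  have e1 : ψ 1 = φ u := by simp [hψ, hd]
  rw [e0, e1] at hslope
  linarith

lemma le_of_forall_tau (a b C : ℝ) (hC : 0 ≤ C)
    (h : ∀ τ : ℝ, 0 < τ → τ ≤ 1 → a ≤ b + τ * C) : a ≤ b := by
  by_contra hab
  push_neg at hab
  have hτpos : 0 < min 1 ((a - b) / (2 * (C + 1))) := by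
    apply lt_min one_pos
    apply div_pos (by linarith) (by linarith)
  have hτ1 : min 1 ((a - b) / (2 * (C + 1))) ≤ 1 := min_le_left _ _
  have hle := h _ hτpos hτ1
  have h2 : min 1 ((a - b) / (2 * (C + 1))) ≤ (a - b) / (2 * (C + 1)) := min_le_right _ _
  have h3 : min 1 ((a - b) / (2 * (C + 1))) * C ≤ (a - b) / (2 * (C + 1)) * C :=
    mul_le_mul_of_nonneg_right h2 hC
  have h4 : (a - b) / (2 * (C + 1)) * C < a - b := by
    rw [div_mul_eq_mul_div, div_lt_iff₀ (by linarith)]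
    nlinarith
  linarith

lemma prox_vi (θ : ℝ) (hθ : 0 < θ) (g : E → EReal) (vin w u : E) (gw gu : ℝ)
    (hgw : g w = (gw : EReal)) (hgu : g u = (gu : EReal))
    (hprox : IsProx θ g vin w)
    (hconv : ∀ a b : ℝ, 0 ≤ a → 0 ≤ b → a + b = 1 →
      g (a • w + b • u) ≤ ((a * gw + b * gu : ℝ) : EReal)) :
    ⟪vin - w, u - w⟫ ≤ θ * (gu - gw) := by
  have key : ∀ τ : ℝ, 0 < τ → τ ≤ 1 →
      ⟪vin - w, u - w⟫ ≤ θ * (gu - gw) + τ * (‖u - w‖ ^ 2 / 2) := by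
    intro τ hτ0 hτ1
    have hy := hprox ((1 - τ) • w + τ • u)
    have hcv := hconv (1 - τ) τ (by linarith) hτ0.le (by ring)
    have hle : ((gw + ‖w - vin‖ ^ 2 / (2 * θ) : ℝ) : EReal) ≤
        (((1 - τ) * gw + τ * gu + ‖((1 - τ) • w + τ • u) - vin‖ ^ 2 / (2 * θ) : ℝ) : EReal) := by
      push_cast
      calc ((gw : EReal) + ((‖w - vin‖ ^ 2 / (2 * θ) : ℝ) : EReal))
          ≤ g ((1 - τ) • w + τ • u)
            + ((‖((1 - τ) • w + τ • u) - vin‖ ^ 2 / (2 * θ) : ℝ) : EReal) := by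
            rw [← hgw]; exact hy
        _ ≤ _ := add_le_add hcv (le_refl _)
    rw [EReal.coe_le_coe_iff] at hle
    have hptdiff : ((1 - τ) • w + τ • u) - vin = (w - vin) + τ • (u - w) := by module
    have hexp : ‖((1 - τ) • w + τ • u) - vin‖ ^ 2 =
        ‖w - vin‖ ^ 2 + 2 * τ * ⟪w - vin, u - w⟫ + τ ^ 2 * ‖u - w‖ ^ 2 := by
      rw [hptdiff, norm_add_sq_real, inner_smul_right, norm_smul, Real.norm_eq_abs]
      rw [mul_pow, sq_abs]
      ring
    rw [hexp] at hle
    have hinner : ⟪vin - w, u - w⟫ = -⟪w - vin, u - w⟫ := by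
      rw [← inner_neg_left]; congr 1; abel
    rw [hinner]
    have h2θ : 0 < 2 * θ := by linarith
    have h6 : τ * (gw - gu) ≤ (2 * τ * ⟪w - vin, u - w⟫ + τ ^ 2 * ‖u - w‖ ^ 2) / (2 * θ) := by
      have expand : (‖w - vin‖ ^ 2 + 2 * τ * ⟪w - vin, u - w⟫ + τ ^ 2 * ‖u - w‖ ^ 2) / (2 * θ)
          = ‖w - vin‖ ^ 2 / (2 * θ)
            + (2 * τ * ⟪w - vin, u - w⟫ + τ ^ 2 * ‖u - w‖ ^ 2) / (2 * θ) := by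
        ring
      rw [expand] at hle
      linarith
    have h7 := mul_le_mul_of_nonneg_right h6 h2θ.le
    rw [div_mul_cancel₀ _ h2θ.ne'] at h7
    nlinarith [mul_pos hτ0 hθ, h7]
  exact le_of_forall_tau ⟪vin - w, u - w⟫ (θ * (gu - gw)) (‖u - w‖ ^ 2 / 2)
    (by positivity) key

lemma key_real (θ lam m L e ep t1 : ℝ)
    (Fw Hw Fv Hv Fs Hs d1 d2 S : ℝ)
    (hθ : 0 < θ) (hlam : 1 < lam) (hm : 0 < m) (hS : 0 ≤ S)
    (hA : θ * ((Fw + e * Hw) - (Fs + e * Hs)) ≤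
      1 / 2 * (d1 ^ 2 - d2 ^ 2) + (θ * L / 2 - 1 / 2) * S)
    (hB : θ * ((Fw + e * Hw) - (Fv + e * Hv)) ≤ (θ * L / 2 - 1) * S)
    (hL2 : θ * L ≤ 2 - m)
    (ha : lam * θ / m ≤ t1 - θ * (lam - 1)) :
    (t1 + θ) * ((Fw + e * Hw) - (Fs + e * Hs)) + lam / 2 * d2 ^ 2
      - (t1 * ((Fv + ep * Hv) - (Fs + ep * Hs)) + lam / 2 * d1 ^ 2)
      + (θ * (lam - 1) * e - t1 * (e - ep)) * (Hv - Hs)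
      + θ * (lam - 1) * (Fv - Fs) ≤ 0 := by
  set a := t1 - θ * (lam - 1) with hadef
  have ha0 : 0 ≤ a := le_trans (by positivity) ha
  set D := (Fw + e * Hw) - (Fs + e * Hs) with hD
  set Q := (Fw + e * Hw) - (Fv + e * Hv) with hQ
  have hident : (t1 + θ) * ((Fw + e * Hw) - (Fs + e * Hs)) + lam / 2 * d2 ^ 2
      - (t1 * ((Fv + ep * Hv) - (Fs + ep * Hs)) + lam / 2 * d1 ^ 2)
      + (θ * (lam - 1) * e - t1 * (e - ep)) * (Hv - Hs)
      + θ * (lam - 1) * (Fv - Fs)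
      = θ * lam * D + a * Q + lam / 2 * (d2 ^ 2 - d1 ^ 2) := by
    rw [hD, hQ, hadef]; ring
  rw [hident]
  have hlam0 : (0:ℝ) < lam := by linarith
  have h1 : θ * lam * (θ * D) ≤ θ * lam * (1 / 2 * (d1 ^ 2 - d2 ^ 2) + (θ * L / 2 - 1 / 2) * S) :=
    mul_le_mul_of_nonneg_left hA (by positivity)
  have h2 : a * (θ * Q) ≤ a * ((θ * L / 2 - 1) * S) :=
    mul_le_mul_of_nonneg_left hB ha0
  have p1 : a * (θ * L / 2 - 1) ≤ -(lam * θ / 2) := by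
    have e1 : θ * L / 2 - 1 ≤ -(m / 2) := by linarith
    have e2 : a * (θ * L / 2 - 1) ≤ a * (-(m / 2)) := mul_le_mul_of_nonneg_left e1 ha0
    have e3 : a * (-(m / 2)) ≤ (lam * θ / m) * (-(m / 2)) := by
      have := mul_le_mul_of_nonneg_right ha (by positivity : (0:ℝ) ≤ m / 2)
      nlinarith
    have e4 : (lam * θ / m) * (-(m / 2)) = -(lam * θ / 2) := by
      field_simp
    linarith
  have p2 : θ * lam * (θ * L / 2 - 1 / 2) ≤ θ * lam * (1 / 2) := by
    have : θ * L / 2 - 1 / 2 ≤ 1 / 2 := by linarith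
    exact mul_le_mul_of_nonneg_left this (by positivity)
  have p1S := mul_le_mul_of_nonneg_right p1 hS
  have p2S := mul_le_mul_of_nonneg_right p2 hS
  have hmain : θ * (θ * lam * D + a * Q + lam / 2 * (d2 ^ 2 - d1 ^ 2)) ≤ θ * 0 := by
    rw [mul_zero]
    linarith [h1, h2, p1S, p2S]
  exact le_of_mul_le_mul_left hmain hθ

set_option maxHeartbeats 2000000 in
/-- dissipation inequality for the discrete Lyapunov energy of Algorithm 1. -/
theorem alg1_lyapunov_dissipation
    (f h : E → ℝ) (fhat hhat : E → EReal) (f' h' : E → E) (Lf Lh : ℝ≥0)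
    (hf_conv : ConvexOn ℝ Set.univ f) (hh_conv : ConvexOn ℝ Set.univ h)
    (hf_grad : ∀ z, HasGradientAt f (f' z) z) (hh_grad : ∀ z, HasGradientAt h (h' z) z)
    (hf_lip : LipschitzWith Lf f') (hh_lip : LipschitzWith Lh h')
    (hfhat_proper : ERealProper fhat) (hfhat_conv : ERealConvexOn fhat)
    (hfhat_lsc : LowerSemicontinuous fhat)
    (hhhat_proper : ERealProper hhat) (hhhat_conv : ERealConvexOn hhat)
    (hhhat_lsc : LowerSemicontinuous hhat)
    (F H : E → EReal)
    (hF : ∀ z, F z = (f z : EReal) + fhat z)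
    (hH : ∀ z, H z = (h z : EReal) + hhat z)
    (hargmin : (argminSet F).Nonempty)
    (hHbd : ∃ m : ℝ, ∀ z, (m : EReal) ≤ H z)
    (hsol : (BilevelSol F H).Nonempty)
    (β c δ : ℝ) (hβ : 0 < β) (hc : 0 < c)
    (ε : ℕ → ℝ) (hε : ∀ k : ℕ, ε k = c / ((k : ℝ) + β) ^ δ)
    (hδ : 0 < δ)
    (θ : ℝ) (hθ0 : 0 < θ) (hθ : θ * (Lf : ℝ) < 2)
    (x : ℕ → E)
    (halg : ∀ k : ℕ,
      IsProx θ (fun z => fhat z + ((ε k : ℝ) : EReal) * hhat z)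
        (x k - θ • (f' (x k) + ε k • h' (x k))) (x (k + 1)))
    (γ lam : ℝ) (hγ : 0 ≤ γ) (hlam : 1 < lam)
    (t : ℕ → ℝ) (ht : ∀ k : ℕ, t k = θ * ((k : ℝ) + γ))
    (Ψ : ℕ → E → EReal) (hΨ : ∀ k : ℕ, ∀ z : E, Ψ k z = F z + ((ε k : ℝ) : EReal) * H z)
    (xs : E) (hxs : xs ∈ BilevelSol F H)
    (En : ℕ → EReal)
    (hEn : ∀ k : ℕ, En k = (t k : EReal) * (Ψ (k - 1) (x k) - Ψ (k - 1) xs) +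
        ((lam / 2 * ‖x k - xs‖ ^ 2 : ℝ) : EReal))
    (ζ : ℕ → ℝ)
    (hζ : ∀ k : ℕ, ζ k = θ * (lam - 1) * ε k - t k * (ε k - ε (k - 1))) :
    ∃ k0 : ℕ, 1 ≤ k0 ∧ ∀ k : ℕ, k0 ≤ k →
      En (k + 1) - En k + (ζ k : EReal) * (H (x k) - H xs) ≤
        ((-(θ * (lam - 1)) : ℝ) : EReal) * (F (x k) - F xs) := by
  obtain ⟨hxs_min, hxs_opt⟩ := hxs
  have hεpos : ∀ k : ℕ, 0 < ε k := by
    intro k; rw [hε]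
    have hb : (0:ℝ) < (k:ℝ) + β := by positivity
    exact div_pos hc (Real.rpow_pos_of_pos hb δ)
  have hfb := hfhat_proper.1
  have hhb := hhhat_proper.1
  obtain ⟨z0, hz0⟩ := hfhat_proper.2
  have hFz0 : F z0 ≠ ⊤ := by
    rw [hF, ← EReal.coe_toReal hz0 (hfb z0), ← EReal.coe_add]
    exact EReal.coe_ne_top _
  have hFxs_top : F xs ≠ ⊤ := ne_top_of_le_ne_top hFz0 (hxs_min z0)
  have hfxs_top : fhat xs ≠ ⊤ := by
    intro hcon
    exact hFxs_top (by rw [hF, hcon, EReal.coe_add_top])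
  set fhs := (fhat xs).toReal with hfhs_def
  have hfxs : fhat xs = (fhs : EReal) := (EReal.coe_toReal hfxs_top (hfb xs)).symm
  by_cases hhtop : hhat xs = ⊤
  · -- degenerate case : H xs = ⊤, the energy difference is ⊥
    refine ⟨1, le_refl 1, fun k hk => ?_⟩
    have hHxs : H xs = ⊤ := by rw [hH, hhtop, EReal.coe_add_top]
    have hFxs_bot : F xs ≠ ⊥ := by
      rw [hF]; simp [EReal.add_eq_bot_iff, hfb xs]
    have hΨtop : ∀ i : ℕ, Ψ i xs = ⊤ := by
      intro i
      rw [hΨ, hHxs, EReal.coe_mul_top_of_pos (hεpos i), EReal.add_top_of_ne_bot hFxs_bot]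
    have htpos : ∀ i : ℕ, 1 ≤ i → 0 < t i := by
      intro i hi; rw [ht]
      have h1i : (1:ℝ) ≤ (i:ℝ) := by exact_mod_cast hi
      apply mul_pos hθ0; linarith
    have hEbot : ∀ i : ℕ, 1 ≤ i → En i = ⊥ := by
      intro i hi
      rw [hEn, hΨtop, EReal.sub_top, EReal.coe_mul_bot_of_pos (htpos i hi), EReal.bot_add]
    rw [hEbot (k+1) (by omega), hEbot k hk, EReal.bot_sub, EReal.bot_add]
    exact bot_le
  · -- main case
    set hhs := (hhat xs).toReal with hhhs_def
    have hhxs : hhat xs = (hhs : EReal) := (EReal.coe_toReal hhtop (hhb xs)).symm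
    -- finiteness of the iterates
    have hfin : ∀ k : ℕ, fhat (x (k+1)) ≠ ⊤ ∧ hhat (x (k+1)) ≠ ⊤ := by
      intro k
      have h1 := halg k xs
      simp only [hfxs, hhxs, ← EReal.coe_mul, ← EReal.coe_add] at h1
      have h2 : fhat (x (k+1)) + ((ε k : ℝ) : EReal) * hhat (x (k+1)) ≠ ⊤ := by
        intro hcon
        rw [hcon, EReal.top_add_coe] at h1
        exact (ne_top_of_le_ne_top (EReal.coe_ne_top _) h1) rfl
      constructor
      · intro hcon; apply h2
        rw [hcon, EReal.top_add_of_ne_bot (coe_mul_ne_bot' _ (hεpos k) _ (hhb _))]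
      · intro hcon; apply h2
        rw [hcon, EReal.coe_mul_top_of_pos (hεpos k), EReal.add_top_of_ne_bot (hfb _)]
    -- choice of k0
    set m := (2 - θ * (Lf:ℝ)) / 2 with hm_def
    have hm0 : 0 < m := by rw [hm_def]; linarith
    have hεtend : Tendsto ε atTop (𝓝 0) := by
      have h1 : Tendsto (fun k : ℕ => ((k:ℝ) + β)) atTop atTop :=
        tendsto_atTop_add_const_right atTop β tendsto_natCast_atTop_atTop
      have h2 : Tendsto (fun k : ℕ => ((k:ℝ) + β) ^ δ) atTop atTop :=
        (tendsto_rpow_atTop hδ).comp h1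
      have h3 : Tendsto (fun k : ℕ => c / ((k:ℝ) + β) ^ δ) atTop (𝓝 0) :=
        tendsto_const_nhds.div_atTop h2
      have hfun : ε = fun k : ℕ => c / ((k:ℝ) + β) ^ δ := funext hε
      rw [hfun]; exact h3
    have hev1 : ∀ᶠ k : ℕ in atTop, ε k * (θ * (Lh:ℝ)) < m := by
      have htd : Tendsto (fun k : ℕ => ε k * (θ * (Lh:ℝ))) atTop (𝓝 0) := by
        simpa using hεtend.mul_const (θ * (Lh:ℝ))
      exact htd.eventually (gt_mem_nhds hm0)
    have hev2 : ∀ᶠ k : ℕ in atTop, lam * θ / m + θ * (lam - 1) ≤ θ * ((k:ℝ) + γ) := by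
      have h1 : Tendsto (fun k : ℕ => θ * ((k:ℝ) + γ)) atTop atTop :=
        (tendsto_atTop_add_const_right atTop γ tendsto_natCast_atTop_atTop).const_mul_atTop hθ0
      exact h1.eventually_ge_atTop _
    obtain ⟨N, hN⟩ := eventually_atTop.mp (hev1.and hev2)
    refine ⟨max N 1, le_max_right _ _, fun k hk => ?_⟩
    have hk1 : 1 ≤ k := le_trans (le_max_right N 1) hk
    have hkN : N ≤ k := le_trans (le_max_left N 1) hk
    obtain ⟨j, rfl⟩ : ∃ j, k = j + 1 := ⟨k - 1, (Nat.succ_pred_eq_of_pos hk1).symm⟩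
    obtain ⟨hc1, hc2⟩ := hN (j+1) hkN
    -- rewrite the goal
    rw [hEn (j+1+1), hEn (j+1), hζ (j+1)]
    simp only [Nat.add_sub_cancel]
    simp only [hΨ, hF, hH, ht]
    -- finiteness data
    obtain ⟨hfvT, hhvT⟩ := hfin j
    obtain ⟨hfwT, hhwT⟩ := hfin (j+1)
    set fv := (fhat (x (j+1))).toReal with hfv_def
    set hv := (hhat (x (j+1))).toReal with hhv_def
    set fw := (fhat (x (j+1+1))).toReal with hfw_def
    set hw := (hhat (x (j+1+1))).toReal with hhw_def
    have hfv' : fhat (x (j+1)) = (fv : EReal) := (EReal.coe_toReal hfvT (hfb _)).symm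
    have hhv' : hhat (x (j+1)) = (hv : EReal) := (EReal.coe_toReal hhvT (hhb _)).symm
    have hfw' : fhat (x (j+1+1)) = (fw : EReal) := (EReal.coe_toReal hfwT (hfb _)).symm
    have hhw' : hhat (x (j+1+1)) = (hw : EReal) := (EReal.coe_toReal hhwT (hhb _)).symm
    rw [hfv', hhv', hfw', hhw', hfxs, hhxs]
    -- the analytic core
    have hepos : 0 < ε (j+1) := hεpos _
    set e := ε (j+1) with he_def
    set φ : E → ℝ := fun z => f z + e * h z with hφ_def
    set φ' : E → E := fun z => f' z + e • h' z with hφ'_def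
    set L : ℝ := (Lf:ℝ) + e * (Lh:ℝ) with hL_def
    have halg' := halg (j+1)
    rw [← he_def] at halg'
    clear_value fhs hhs m fv hv fw hw e φ φ' L
    have hφgrad : ∀ z, HasGradientAt φ (φ' z) z := by
      intro z
      have h1 := hasGradientAt_iff_hasFDerivAt.mp (hf_grad z)
      have h2 := hasGradientAt_iff_hasFDerivAt.mp (hh_grad z)
      have h3 := h1.add (h2.const_mul e)
      rw [hφ_def, hφ'_def, hasGradientAt_iff_hasFDerivAt]
      convert h3 using 1
      · rfl
      · rfl
      · rfl
      · simp [map_add, _root_.map_smul]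
    have hφlip : ∀ a b : E, ‖φ' a - φ' b‖ ≤ L * ‖a - b‖ := by
      intro a b
      have hd : φ' a - φ' b = (f' a - f' b) + e • (h' a - h' b) := by
        rw [hφ'_def]; module
      rw [hd]
      have l1 : ‖f' a - f' b‖ ≤ (Lf:ℝ) * ‖a-b‖ := by
        have := hf_lip.dist_le_mul a b; rwa [dist_eq_norm, dist_eq_norm] at this
      have l2 : ‖h' a - h' b‖ ≤ (Lh:ℝ) * ‖a-b‖ := by
        have := hh_lip.dist_le_mul a b; rwa [dist_eq_norm, dist_eq_norm] at this
      calc ‖(f' a - f' b) + e • (h' a - h' b)‖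
          ≤ ‖f' a - f' b‖ + ‖e • (h' a - h' b)‖ := norm_add_le _ _
        _ = ‖f' a - f' b‖ + e * ‖h' a - h' b‖ := by
            rw [norm_smul, Real.norm_eq_abs, abs_of_pos hepos]
        _ ≤ (Lf:ℝ)*‖a-b‖ + e * ((Lh:ℝ)*‖a-b‖) :=
            add_le_add l1 (mul_le_mul_of_nonneg_left l2 hepos.le)
        _ = L * ‖a - b‖ := by rw [hL_def]; ring
    have hφconv : ConvexOn ℝ Set.univ φ := by
      have h1 := hf_conv.add (hh_conv.smul hepos.le)
      have h2 : (fun z => f z + e * h z) = (f + e • h) := by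
        funext z; simp [smul_eq_mul]
      rw [hφ_def, h2]; exact h1
    -- generic prox-gradient inequality
    have hAgen : ∀ (u : E) (fu hu : ℝ), fhat u = (fu : EReal) → hhat u = (hu : EReal) →
        θ * ((φ (x (j+1+1)) + (fw + e * hw)) - (φ u + (fu + e * hu))) ≤
          1/2 * (‖x (j+1) - u‖^2 - ‖x (j+1+1) - u‖^2)
            + (θ * L / 2 - 1/2) * ‖x (j+1+1) - x (j+1)‖^2 := by
      intro u fu hu hfu hhu
      have hgw : fhat (x (j+1+1)) + ((e : ℝ) : EReal) * hhat (x (j+1+1))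
          = ((fw + e*hw : ℝ) : EReal) := by
        rw [hfw', hhw', ← EReal.coe_mul, ← EReal.coe_add]
      have hgu : fhat u + ((e : ℝ) : EReal) * hhat u = ((fu + e*hu : ℝ) : EReal) := by
        rw [hfu, hhu, ← EReal.coe_mul, ← EReal.coe_add]
      have hconvu : ∀ a b : ℝ, 0 ≤ a → 0 ≤ b → a + b = 1 →
          (fun z => fhat z + ((e : ℝ) : EReal) * hhat z) (a • x (j+1+1) + b • u)
            ≤ ((a * (fw + e*hw) + b * (fu + e*hu) : ℝ) : EReal) := by
        intro a b ha hb hab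
        have hf1 := hfhat_conv (x (j+1+1)) u a b ha hb hab
        have hh1 := hhhat_conv (x (j+1+1)) u a b ha hb hab
        rw [hfw', hfu, ← EReal.coe_mul, ← EReal.coe_mul, ← EReal.coe_add] at hf1
        rw [hhw', hhu, ← EReal.coe_mul, ← EReal.coe_mul, ← EReal.coe_add] at hh1
        have hzb := hhb (a • x (j+1+1) + b • u)
        have hzT : hhat (a • x (j+1+1) + b • u) ≠ ⊤ :=
          ne_top_of_le_ne_top (EReal.coe_ne_top _) hh1
        have hz : hhat (a • x (j+1+1) + b • u)
            = (((hhat (a • x (j+1+1) + b • u)).toReal : ℝ) : EReal) :=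
          (EReal.coe_toReal hzT hzb).symm
        rw [hz] at hh1
        have hzr : (hhat (a • x (j+1+1) + b • u)).toReal ≤ a*hw + b*hu :=
          EReal.coe_le_coe_iff.mp hh1
        show fhat (a • x (j+1+1) + b • u) + ((e : ℝ) : EReal) * hhat (a • x (j+1+1) + b • u) ≤ _
        rw [hz, ← EReal.coe_mul]
        calc fhat (a • x (j+1+1) + b • u)
              + ((e * (hhat (a • x (j+1+1) + b • u)).toReal : ℝ) : EReal)
            ≤ ((a*fw + b*fu : ℝ) : EReal)
              + ((e * (hhat (a • x (j+1+1) + b • u)).toReal : ℝ) : EReal) :=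
              add_le_add hf1 (le_refl _)
          _ = ((a*fw + b*fu + e * (hhat (a • x (j+1+1) + b • u)).toReal : ℝ) : EReal) := by
              rw [← EReal.coe_add]
          _ ≤ ((a * (fw + e*hw) + b * (fu + e*hu) : ℝ) : EReal) := by
              rw [EReal.coe_le_coe_iff]
              nlinarith [mul_le_mul_of_nonneg_left hzr hepos.le]
      have hVI := prox_vi θ hθ0 (fun z => fhat z + ((e : ℝ) : EReal) * hhat z)
        (x (j+1) - θ • (f' (x (j+1)) + e • h' (x (j+1)))) (x (j+1+1)) u
        (fw + e*hw) (fu + e*hu) hgw hgu halg' hconvu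
      have hexp0 : (x (j+1) - θ • (f' (x (j+1)) + e • h' (x (j+1)))) - x (j+1+1)
          = (x (j+1) - x (j+1+1)) - θ • (φ' (x (j+1))) := by
        rw [hφ'_def]; module
      rw [hexp0] at hVI
      rw [inner_sub_left, real_inner_smul_left] at hVI
      have hdes := descent_aux φ φ' L hφgrad hφlip (x (j+1)) (x (j+1+1))
      have hcg := convexGrad_aux φ φ' hφconv hφgrad (x (j+1)) u
      have hpol : ⟪x (j+1) - x (j+1+1), u - x (j+1+1)⟫
          = (‖x (j+1) - x (j+1+1)‖^2 + ‖u - x (j+1+1)‖^2 - ‖x (j+1) - u‖^2)/2 := by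
        have habel : x (j+1) - u = (x (j+1) - x (j+1+1)) - (u - x (j+1+1)) := by abel
        have hnorm : ‖x (j+1) - u‖^2 = ‖x (j+1) - x (j+1+1)‖^2
            - 2*⟪x (j+1) - x (j+1+1), u - x (j+1+1)⟫ + ‖u - x (j+1+1)‖^2 := by
          rw [habel, norm_sub_sq_real]
        linarith
      have hiaddθ : θ * ⟪φ' (x (j+1)), u - x (j+1)⟫
          = θ * ⟪φ' (x (j+1)), x (j+1+1) - x (j+1)⟫ + θ * ⟪φ' (x (j+1)), u - x (j+1+1)⟫ := by
        have : ⟪φ' (x (j+1)), u - x (j+1)⟫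
            = ⟪φ' (x (j+1)), x (j+1+1) - x (j+1)⟫ + ⟪φ' (x (j+1)), u - x (j+1+1)⟫ := by
          rw [← inner_add_right]; congr 1; abel
        rw [this]; ring
      have hrev1 : ‖u - x (j+1+1)‖ = ‖x (j+1+1) - u‖ := norm_sub_rev _ _
      have hrev2 : ‖x (j+1) - x (j+1+1)‖ = ‖x (j+1+1) - x (j+1)‖ := norm_sub_rev _ _
      rw [hrev1, hrev2] at hpol
      have hdesθ := mul_le_mul_of_nonneg_left hdes hθ0.le
      have hcgθ := mul_le_mul_of_nonneg_left hcg hθ0.le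
      linarith [hdesθ, hcgθ, hVI, hpol, hiaddθ]
    have hAs := hAgen xs fhs hhs hfxs hhxs
    have hAv := hAgen (x (j+1)) fv hv hfv' hhv'
    simp only [sub_self, norm_zero] at hAv
    -- scalar conditions
    have hL2 : θ * L ≤ 2 - m := by
      rw [hL_def, hm_def]; nlinarith [hc1]
    have ha : lam * θ / m ≤ θ * (((j:ℝ)+1) + γ) - θ * (lam - 1) := by
      push_cast at hc2
      linarith
    have hkey := key_real θ lam m L e (ε j) (θ * (((j:ℝ)+1) + γ))
      (f (x (j+1+1)) + fw) (h (x (j+1+1)) + hw)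
      (f (x (j+1)) + fv) (h (x (j+1)) + hv)
      (f xs + fhs) (h xs + hhs)
      (‖x (j+1) - xs‖) (‖x (j+1+1) - xs‖) (‖x (j+1+1) - x (j+1)‖^2)
      hθ0 hlam hm0 (by positivity)
      (by rw [hφ_def] at hAs; simp only [] at hAs; linarith [hAs])
      (by rw [hφ_def] at hAv; simp only [] at hAv; linarith [hAv])
      hL2 ha
    -- conclude by coercion
    push_cast
    norm_cast
    push_cast
    linarith [hkey]
end
end

section
/- Suppose F satisfies the Hölderian growth condition with exponent ρ ∈ (1,2] and constant τ > 0. Let x* be a solution of the bilevel problem (P) and let p* ∈ N_{argmin F}(x*) be such that −p* ∈ ∂H(x*). Then for all x ∈ 𝓗: H(x*) − H(x) ≤ ‖p*‖ · ((F(x) − F(x*)) / (τ ρ^{−1}))^{1/ρ}. -/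
open Filter Topology Metric MeasureTheory Asymptotics
open scoped Pointwise RealInnerProductSpace ENNReal NNReal

noncomputable section

variable {E : Type*} [NormedAddCommGroup E] [InnerProductSpace ℝ E] [CompleteSpace E]

/-- under Hölderian growth of `F`, for a bilevel solution `x*` and
`p* ∈ N_{argmin F}(x*)` with `-p* ∈ ∂H(x*)`, one has
`H(x*) - H(x) ≤ ‖p*‖ ((F(x) - F(x*)) / (τ ρ⁻¹))^{1/ρ}` for all `x`. -/
theorem holder_outer_bound
    (f h : E → ℝ) (fhat hhat : E → EReal) (f' h' : E → E) (Lf Lh : ℝ≥0)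
    (hf_conv : ConvexOn ℝ Set.univ f) (hh_conv : ConvexOn ℝ Set.univ h)
    (hf_grad : ∀ z, HasGradientAt f (f' z) z) (hh_grad : ∀ z, HasGradientAt h (h' z) z)
    (hf_lip : LipschitzWith Lf f') (hh_lip : LipschitzWith Lh h')
    (hfhat_proper : ERealProper fhat) (hfhat_conv : ERealConvexOn fhat)
    (hfhat_lsc : LowerSemicontinuous fhat)
    (hhhat_proper : ERealProper hhat) (hhhat_conv : ERealConvexOn hhat)
    (hhhat_lsc : LowerSemicontinuous hhat)
    (F H : E → EReal)
    (hF : ∀ z, F z = (f z : EReal) + fhat z)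
    (hH : ∀ z, H z = (h z : EReal) + hhat z)
    (hargmin : (argminSet F).Nonempty)
    (hHbd : ∃ m : ℝ, ∀ z, (m : EReal) ≤ H z)
    (hsol : (BilevelSol F H).Nonempty)
    (ρ τ : ℝ) (hρ1 : 1 < ρ) (hρ2 : ρ ≤ 2) (hτ : 0 < τ)
    (hHG : ∀ z : E, ((τ / ρ * infDist z (argminSet F) ^ ρ : ℝ) : EReal) ≤ F z - ⨅ w, F w)
    (xs : E) (hxs : xs ∈ BilevelSol F H)
    (p : E) (hp : p ∈ normalCone (argminSet F) xs) (hpH : -p ∈ ERealSubdiff H xs) :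
    ∀ z : E, H xs - H z ≤
      (((‖p‖₊ : ℝ≥0∞) *
        (erealToENNReal (F z - F xs) / ENNReal.ofReal (τ / ρ)) ^ (1 / ρ) : ℝ≥0∞) : EReal) := by
  intro z
  obtain ⟨hxs_arg, -⟩ := hxs
  have hρ0 : 0 < ρ := lt_trans one_pos hρ1
  have hτρ : 0 < τ / ρ := div_pos hτ hρ0
  by_cases hHz : H z = ⊤
  · rw [hHz, EReal.sub_top]; exact bot_le
  have hpH' := hpH z
  have hHxs_nb : H xs ≠ ⊥ := by
    rw [hH]; simp [EReal.add_eq_bot_iff, hhhat_proper.1 xs]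
  have hHz_nb : H z ≠ ⊥ := by
    rw [hH]; simp [EReal.add_eq_bot_iff, hhhat_proper.1 z]
  have hHxs_nt : H xs ≠ ⊤ := by
    intro htop
    rw [htop, EReal.top_add_coe] at hpH'
    exact hHz (top_le_iff.1 hpH')
  set a := (H xs).toReal with ha
  set b := (H z).toReal with hb
  have haa : ((a : ℝ) : EReal) = H xs := EReal.coe_toReal hHxs_nt hHxs_nb
  have hbb : ((b : ℝ) : EReal) = H z := EReal.coe_toReal hHz hHz_nb
  rw [← haa, ← hbb] at hpH' ⊢
  rw [← EReal.coe_sub]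
  set c : ℝ := ⟪p, z - xs⟫ with hc
  have hab : a - b ≤ c := by
    rw [← EReal.coe_add, EReal.coe_le_coe_iff] at hpH'
    have : ⟪-p, z - xs⟫ = -c := by rw [hc, inner_neg_left]
    rw [this] at hpH'
    linarith
  have key : (c : EReal) ≤
      (((‖p‖₊ : ℝ≥0∞) *
        (erealToENNReal (F z - F xs) / ENNReal.ofReal (τ / ρ)) ^ (1 / ρ) : ℝ≥0∞) : EReal) := by
    by_cases hp0 : p = 0
    · have : c = 0 := by rw [hc, hp0, inner_zero_left]
      rw [this, EReal.coe_zero]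
      exact EReal.coe_ennreal_nonneg _
    have hpn : 0 < ‖p‖ := norm_pos_iff.2 hp0
    -- F xs is finite
    have hFxs_nb : F xs ≠ ⊥ := by
      rw [hF]; simp [EReal.add_eq_bot_iff, hfhat_proper.1 xs]
    have hFxs_nt : F xs ≠ ⊤ := by
      obtain ⟨x0, hx0⟩ := hfhat_proper.2
      have h1 : F x0 ≠ ⊤ := by
        rw [hF]
        exact (EReal.add_lt_top (EReal.coe_lt_top _).ne hx0).ne
      exact ne_top_of_le_ne_top h1 (hxs_arg x0)
    have hFinf : (⨅ w, F w) = F xs :=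
      le_antisymm (iInf_le _ xs) (le_iInf hxs_arg)
    set b0 := (F xs).toReal with hb0
    have hbb0 : ((b0 : ℝ) : EReal) = F xs := EReal.coe_toReal hFxs_nt hFxs_nb
    set d := infDist z (argminSet F) with hd
    have hd0 : 0 ≤ d := infDist_nonneg
    -- c ≤ ‖p‖ * d
    have hcd : c ≤ ‖p‖ * d := by
      have hne : Nonempty (argminSet F) := hargmin.to_subtype
      have h1 : c / ‖p‖ ≤ d := by
        rw [hd, infDist_eq_iInf]
        apply le_ciInf
        rintro ⟨u, hu⟩
        rw [div_le_iff₀ hpn]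
        have : c = ⟪p, z - u⟫ + ⟪p, u - xs⟫ := by
          rw [hc, ← inner_add_right]
          congr 1
          abel
        calc c ≤ ⟪p, z - u⟫ + 0 := by rw [this]; gcongr; exact hp u hu
          _ = ⟪p, z - u⟫ := by ring
          _ ≤ ‖p‖ * ‖z - u‖ := real_inner_le_norm _ _
          _ = dist z u * ‖p‖ := by rw [dist_eq_norm]; ring
      calc c = c / ‖p‖ * ‖p‖ := by field_simp
        _ ≤ d * ‖p‖ := by gcongr
        _ = ‖p‖ * d := mul_comm _ _
    by_cases hFz : F z = ⊤
    · -- RHS is ⊤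
      have h1 : F z - F xs = ⊤ := by rw [hFz, ← hbb0, EReal.top_sub_coe]
      have h2 : erealToENNReal (F z - F xs) = ⊤ := by rw [h1, erealToENNReal, if_pos rfl]
      rw [h2, ENNReal.top_div_of_ne_top ENNReal.ofReal_ne_top,
        ENNReal.top_rpow_of_pos (by positivity), ENNReal.mul_top (by simpa using hp0)]
      exact le_top
    · have hFz_nb : F z ≠ ⊥ := by
        rw [hF]; simp [EReal.add_eq_bot_iff, hfhat_proper.1 z]
      set a0 := (F z).toReal with ha0
      have haa0 : ((a0 : ℝ) : EReal) = F z := EReal.coe_toReal hFz hFz_nb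
      set r := a0 - b0 with hr
      have hFsub : F z - F xs = ((r : ℝ) : EReal) := by
        rw [← haa0, ← hbb0, ← EReal.coe_sub]
      have hgrow : τ / ρ * d ^ ρ ≤ r := by
        have := hHG z
        rw [hFinf, hFsub, EReal.coe_le_coe_iff] at this
        exact this
      have hr0 : 0 ≤ r := le_trans (by positivity) hgrow
      have hdr : d ^ ρ ≤ r / (τ / ρ) := (le_div_iff₀' hτρ).2 hgrow
      have hde : d ≤ (r / (τ / ρ)) ^ (1 / ρ) := by
        calc d = (d ^ ρ) ^ (1 / ρ) := by
              rw [one_div, Real.rpow_rpow_inv hd0 hρ0.ne']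
          _ ≤ (r / (τ / ρ)) ^ (1 / ρ) :=
              Real.rpow_le_rpow (by positivity) hdr (by positivity)
      have hfinal : c ≤ ‖p‖ * (r / (τ / ρ)) ^ (1 / ρ) :=
        le_trans hcd (mul_le_mul_of_nonneg_left hde (norm_nonneg p))
      rw [hFsub]
      have h2 : erealToENNReal ((r : ℝ) : EReal) = ENNReal.ofReal r := by
        rw [erealToENNReal, if_neg (EReal.coe_ne_top r), EReal.toReal_coe]
      rw [h2, ← ENNReal.ofReal_div_of_pos hτρ,
        ENNReal.ofReal_rpow_of_nonneg (by positivity) (by positivity),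
        ← enorm_eq_nnnorm, ← ofReal_norm p, ← ENNReal.ofReal_mul (norm_nonneg p),
        EReal.coe_ennreal_ofReal]
      exact EReal.coe_le_coe_iff.2 (le_trans hfinal (le_max_left _ _))
  calc ((a - b : ℝ) : EReal) ≤ (c : EReal) := EReal.coe_le_coe_iff.2 hab
    _ ≤ _ := key
end
end

section
/- Let (φ_k)_{k≥0} be a sequence of real numbers and (t_k)_{k≥0} a sequence of positive numbers such that Σ_{k=0}^{∞} 1/t_k = +∞. If φ_{k+1} + t_k (φ_{k+1} − φ_k) → L ∈ ℝ as k → +∞, then φ_k → L as k → +∞. -/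
open Filter Topology Metric MeasureTheory Asymptotics
open scoped Pointwise RealInnerProductSpace ENNReal NNReal

noncomputable section

variable {E : Type*} [NormedAddCommGroup E] [InnerProductSpace ℝ E] [CompleteSpace E]

lemma aux_one_add_sum_le_prod (s : Finset ℕ) (x : ℕ → ℝ) (hx : ∀ j, 0 ≤ x j) :
    1 + ∑ j ∈ s, x j ≤ ∏ j ∈ s, (1 + x j) := by
  classical
  refine Finset.induction_on s (by simp) ?_
  intro a s' ha ih
  rw [Finset.sum_insert ha, Finset.prod_insert ha]
  have hs : 0 ≤ ∑ j ∈ s', x j := Finset.sum_nonneg fun j _ => hx j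
  nlinarith [hx a, ih]

/-- if `t_k > 0`, `Σ 1/t_k = +∞` and
`φ_{k+1} + t_k (φ_{k+1} - φ_k) → L`, then `φ_k → L`. -/
theorem limit_of_perturbed_sequence
    (φ t : ℕ → ℝ) (ht : ∀ k : ℕ, 0 < t k)
    (hdiv : ¬ Summable fun k : ℕ => 1 / t k) (L : ℝ)
    (hlim : Tendsto (fun k : ℕ => φ (k + 1) + t k * (φ (k + 1) - φ k)) atTop (𝓝 L)) :
    Tendsto φ atTop (𝓝 L) := by
  have ht1 : ∀ k, 0 < 1 + t k := fun k => by linarith [ht k]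
  set a : ℕ → ℝ := fun k => φ (k + 1) + t k * (φ (k + 1) - φ k) with ha
  set r : ℕ → ℝ := fun k => t k / (1 + t k) with hrdef
  have hr0 : ∀ k, 0 ≤ r k := fun k => div_nonneg (ht k).le (ht1 k).le
  have hr1 : ∀ k, r k ≤ 1 := fun k => by
    rw [hrdef]; exact (div_le_one (ht1 k)).mpr (by linarith [ht k])
  have key : ∀ k, |φ (k+1) - L| ≤ r k * |φ k - L| + (1 - r k) * |a k - L| := by
    intro k
    have hrk : r k = t k / (1 + t k) := rfl
    have hak : a k = φ (k + 1) + t k * (φ (k + 1) - φ k) := rfl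
    have h0 : (1 + t k) ≠ 0 := (ht1 k).ne'
    have h1 : φ (k+1) - L = r k * (φ k - L) + (1 - r k) * (a k - L) := by
      rw [hrk, hak]; field_simp; ring
    calc |φ (k+1) - L| = |r k * (φ k - L) + (1 - r k) * (a k - L)| := by rw [h1]
      _ ≤ |r k * (φ k - L)| + |(1 - r k) * (a k - L)| := abs_add_le _ _
      _ = r k * |φ k - L| + (1 - r k) * |a k - L| := by
          rw [abs_mul, abs_mul, abs_of_nonneg (hr0 k),
            abs_of_nonneg (by linarith [hr1 k] : (0:ℝ) ≤ 1 - r k)]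
  rw [Metric.tendsto_atTop] at hlim ⊢
  intro ε hε
  obtain ⟨N, hN⟩ := hlim (ε/2) (by linarith)
  set Q : ℕ → ℝ := fun m => ∏ j ∈ Finset.Ico N (N+m), r j with hQdef
  set c : ℝ := |φ N - L| with hc
  have hc0 : 0 ≤ c := abs_nonneg _
  have hQ0 : ∀ m, 0 ≤ Q m := fun m => Finset.prod_nonneg fun j _ => hr0 j
  have hbound : ∀ m, |φ (N+m) - L| ≤ ε/2 + Q m * c := by
    intro m
    induction m with
    | zero =>
      have hq : Q 0 = 1 := by rw [hQdef]; simp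
      have hφ : |φ (N+0) - L| = c := rfl
      rw [hq, hφ]; linarith
    | succ m ih =>
      have hQs : Q (m+1) = Q m * r (N+m) :=
        Finset.prod_Ico_succ_top (Nat.le_add_right N m) r
      have haN : |a (N+m) - L| ≤ ε/2 := by
        have := hN (N+m) (Nat.le_add_right N m)
        rw [Real.dist_eq] at this
        linarith
      have hk := key (N+m)
      show |φ ((N+m)+1) - L| ≤ ε/2 + Q (m+1) * c
      have h2 : r (N+m) * |φ (N+m) - L| ≤ r (N+m) * (ε/2 + Q m * c) :=
        mul_le_mul_of_nonneg_left ih (hr0 _)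
      have h3 : (1 - r (N+m)) * |a (N+m) - L| ≤ (1 - r (N+m)) * (ε/2) :=
        mul_le_mul_of_nonneg_left haN (by linarith [hr1 (N+m)])
      rw [hQs]
      nlinarith [hk]
  have hsum : Tendsto (fun n => ∑ i ∈ Finset.range n, 1 / t i) atTop atTop := by
    rw [← not_summable_iff_tendsto_nat_atTop_of_nonneg
      (fun i => (one_div_pos.mpr (ht i)).le)]
    exact hdiv
  have hS : Tendsto (fun m => 1 + ∑ j ∈ Finset.Ico N (N+m), 1 / t j) atTop atTop := by
    have hcomp : Tendsto (fun m => ∑ i ∈ Finset.range (N+m), 1/t i) atTop atTop := by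
      refine tendsto_atTop_mono (fun m => ?_) hsum
      exact Finset.sum_le_sum_of_subset_of_nonneg
        (Finset.range_subset_range.mpr (Nat.le_add_left m N))
        (fun i _ _ => (one_div_pos.mpr (ht i)).le)
    have h2 : Tendsto (fun m => ∑ j ∈ Finset.Ico N (N+m), 1 / t j) atTop atTop := by
      have heq : (fun m => ∑ j ∈ Finset.Ico N (N+m), 1 / t j)
          = fun m => (∑ i ∈ Finset.range (N+m), 1/t i) + -(∑ i ∈ Finset.range N, 1/t i) := by
        funext m
        rw [Finset.sum_Ico_eq_sub _ (Nat.le_add_right N m)]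
        ring
      rw [heq]
      exact tendsto_atTop_add_const_right atTop _ hcomp
    exact tendsto_atTop_add_const_left atTop 1 h2
  have hQle : ∀ m, Q m ≤ (1 + ∑ j ∈ Finset.Ico N (N+m), 1 / t j)⁻¹ := by
    intro m
    have hxpos : ∀ j, (0:ℝ) ≤ 1 / t j := fun j => (one_div_pos.mpr (ht j)).le
    have hps : 1 + ∑ j ∈ Finset.Ico N (N+m), 1 / t j
        ≤ ∏ j ∈ Finset.Ico N (N+m), (1 + 1 / t j) :=
      aux_one_add_sum_le_prod _ _ hxpos
    have hpspos : 0 < 1 + ∑ j ∈ Finset.Ico N (N+m), 1 / t j := by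
      have : 0 ≤ ∑ j ∈ Finset.Ico N (N+m), 1 / t j :=
        Finset.sum_nonneg fun j _ => hxpos j
      linarith
    have hQinv : Q m * ∏ j ∈ Finset.Ico N (N+m), (1 + 1 / t j) = 1 := by
      rw [hQdef, ← Finset.prod_mul_distrib]
      apply Finset.prod_eq_one
      intro j _
      have hrj : r j = t j / (1 + t j) := rfl
      have hme : t j * (1 + 1 / t j) = 1 + t j := by
        rw [mul_add, mul_one, mul_one_div, div_self (ht j).ne']; ring
      rw [hrj, div_mul_eq_mul_div, hme, div_self (ht1 j).ne']
    have hPpos : 0 < ∏ j ∈ Finset.Ico N (N+m), (1 + 1 / t j) := lt_of_lt_of_le hpspos hps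
    have hQeq : Q m = 1 / ∏ j ∈ Finset.Ico N (N+m), (1 + 1 / t j) := by
      rw [eq_div_iff hPpos.ne']; exact hQinv
    rw [hQeq, inv_eq_one_div]
    exact one_div_le_one_div_of_le hpspos hps
  have hQtend : Tendsto Q atTop (𝓝 0) := by
    refine squeeze_zero hQ0 hQle ?_
    exact tendsto_inv_atTop_zero.comp hS
  have hQc : Tendsto (fun m => Q m * c) atTop (𝓝 0) := by
    simpa using hQtend.mul_const c
  rw [Metric.tendsto_atTop] at hQc
  obtain ⟨M, hM⟩ := hQc (ε/2) (by linarith)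
  refine ⟨N + M, fun n hn => ?_⟩
  have hNn : N ≤ n := le_trans (Nat.le_add_right N M) hn
  have hmM : M ≤ n - N := by omega
  have hneq : n = N + (n - N) := by omega
  have h1 : Q (n - N) * c < ε/2 := by
    have := hM (n - N) hmM
    rw [Real.dist_eq, sub_zero] at this
    calc Q (n-N) * c ≤ |Q (n-N) * c| := le_abs_self _
      _ < ε/2 := this
  have h2 := hbound (n - N)
  rw [Real.dist_eq, hneq]
  calc |φ (N + (n - N)) - L| ≤ ε/2 + Q (n-N) * c := h2
    _ < ε := by linarith
end
end

section
/- Let t_k := θ(k + γ) with θ > 0 and γ ≥ 0, and let (F_k)_{k≥0} be a sequence of nonnegative numbers such that, for some k_0 ≥ 0 and positive constants C_E and C_{0,F}, F_k ≤ C_E t_k^{−η} + C_{0,F} t_k^{−δ} F_k^{1/ρ} for all k ≥ k_0, and F_k = O(k^{−δ}) as k → +∞, where ρ ∈ (1,2], η ∈ {1,2}, and δ ∈ (η/ρ*, η) with 1/ρ + 1/ρ* = 1. Then F_k = O(k^{−η}) as k → +∞. -/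
open Filter Topology Metric MeasureTheory Asymptotics
open scoped Pointwise RealInnerProductSpace ENNReal NNReal

noncomputable section

variable {E : Type*} [NormedAddCommGroup E] [InnerProductSpace ℝ E] [CompleteSpace E]

/-- bootstrapping the rate `F_k = O(k^{-δ})` to `F_k = O(k^{-η})`. -/
theorem rate_improvement
    (θ γ : ℝ) (hθ : 0 < θ) (hγ : 0 ≤ γ)
    (t : ℕ → ℝ) (ht : ∀ k : ℕ, t k = θ * ((k : ℝ) + γ))
    (F : ℕ → ℝ) (hFnn : ∀ k : ℕ, 0 ≤ F k)
    (ρ ρs η δ : ℝ) (hρ1 : 1 < ρ) (hρ2 : ρ ≤ 2) (hρs : 1 / ρ + 1 / ρs = 1)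
    (hη : η = 1 ∨ η = 2) (hδlb : η / ρs < δ) (hδub : δ < η)
    (CE C0F : ℝ) (hCE : 0 < CE) (hC0F : 0 < C0F) (k0 : ℕ)
    (hrec : ∀ k : ℕ, k0 ≤ k → F k ≤ CE * t k ^ (-η) + C0F * t k ^ (-δ) * F k ^ (1 / ρ))
    (hO : (fun k : ℕ => F k) =O[atTop] fun k : ℕ => (k : ℝ) ^ (-δ)) :
    (fun k : ℕ => F k) =O[atTop] fun k : ℕ => (k : ℝ) ^ (-η) := by
  have hρ0 : 0 < ρ := lt_trans one_pos hρ1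
  have hηpos : 0 < η := by rcases hη with h | h <;> simp [h]
  have hρsinv : 1 / ρs = 1 - 1 / ρ := by linarith
  have hρsinvpos : 0 < 1 / ρs := by
    rw [hρsinv]; have : 1 / ρ < 1 := by rw [div_lt_one hρ0]; exact hρ1
    linarith
  have hρspos : 0 < ρs := by
    by_contra h
    push_neg at h
    have : 1 / ρs ≤ 0 := div_nonpos_of_nonneg_of_nonpos zero_le_one h
    linarith
  have hρs1 : 1 < ρs := by
    have h1 : 1 / ρs < 1 := by
      rw [hρsinv]
      have : 0 < 1 / ρ := by positivity
      linarith
    rw [div_lt_one hρspos] at h1; exact h1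
  have hconj : Real.HolderConjugate ρs ρ := by
    rw [Real.holderConjugate_iff]
    constructor
    · exact hρs1
    · rw [inv_eq_one_div, inv_eq_one_div]; linarith
  have hδpos : 0 < δ := lt_trans (by positivity) hδlb
  have hηlt : η < δ * ρs := by
    have := (div_lt_iff₀ hρspos).mp hδlb; linarith
  set lam : ℝ := (2 / ρ) ^ (1 / ρ) with hlam
  have hlampos : 0 < lam := Real.rpow_pos_of_pos (by positivity) _
  have hlamρ : lam ^ ρ = 2 / ρ := by
    rw [hlam, ← Real.rpow_mul (by positivity), one_div_mul_cancel hρ0.ne', Real.rpow_one]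
  set A : ℝ := (C0F * lam) ^ ρs / ρs with hA
  have hAnn : 0 ≤ A := by
    apply div_nonneg _ hρspos.le
    exact Real.rpow_nonneg (by positivity) _
  set M : ℝ := (2 * CE + 2 * A) * θ ^ (-η) with hM
  have hMpos : 0 < 2 * CE + 2 * A := by positivity
  -- eventual bound
  apply IsBigO.of_bound M
  filter_upwards [eventually_ge_atTop (max k0 (max 1 (Nat.ceil θ⁻¹ + 1)))] with k hk
  have hk0 : k0 ≤ k := le_trans (le_max_left _ _) hk
  have hk1 : 1 ≤ k := le_trans (le_trans (le_max_left _ _) (le_max_right _ _)) hk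
  have hkθ : θ⁻¹ < (k : ℝ) := by
    have h1 : (Nat.ceil θ⁻¹ + 1 : ℕ) ≤ k :=
      le_trans (le_trans (le_max_right _ _) (le_max_right _ _)) hk
    have h2 : θ⁻¹ ≤ (Nat.ceil θ⁻¹ : ℝ) := Nat.le_ceil _
    have h3 : ((Nat.ceil θ⁻¹ + 1 : ℕ) : ℝ) ≤ (k : ℝ) := by exact_mod_cast h1
    push_cast at h3
    linarith
  have hkpos : (0 : ℝ) < k := lt_of_lt_of_le (by positivity) hkθ.le
  have htk1 : 1 ≤ t k := by
    rw [ht k]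
    have : θ * θ⁻¹ ≤ θ * ((k : ℝ) + γ) := by
      apply mul_le_mul_of_nonneg_left _ hθ.le
      linarith
    rwa [mul_inv_cancel₀ hθ.ne'] at this
  have htkpos : 0 < t k := lt_of_lt_of_le one_pos htk1
  -- Young's inequality step
  have hyoung : C0F * t k ^ (-δ) * F k ^ (1 / ρ) ≤ A * t k ^ (-δ * ρs) + F k / 2 := by
    have key := Real.young_inequality_of_nonneg
      (a := C0F * t k ^ (-δ) * lam) (b := F k ^ (1 / ρ) / lam)
      (by positivity) (div_nonneg (Real.rpow_nonneg (hFnn k) _) hlampos.le) hconj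
    have hab : (C0F * t k ^ (-δ) * lam) * (F k ^ (1 / ρ) / lam)
        = C0F * t k ^ (-δ) * F k ^ (1 / ρ) := by
      field_simp
    have ha : (C0F * t k ^ (-δ) * lam) ^ ρs / ρs = A * t k ^ (-δ * ρs) := by
      rw [show C0F * t k ^ (-δ) * lam = (C0F * lam) * t k ^ (-δ) by ring,
        Real.mul_rpow (by positivity) (by positivity), ← Real.rpow_mul htkpos.le, hA]
      ring
    have hb : (F k ^ (1 / ρ) / lam) ^ ρ / ρ = F k / 2 := by
      rw [Real.div_rpow (Real.rpow_nonneg (hFnn k) _) hlampos.le,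
        ← Real.rpow_mul (hFnn k), one_div_mul_cancel hρ0.ne', Real.rpow_one, hlamρ]
      field_simp
    rw [hab, ha, hb] at key
    exact key
  have hstep : F k ≤ CE * t k ^ (-η) + A * t k ^ (-δ * ρs) + F k / 2 :=
    le_trans (hrec k hk0) (by linarith)
  have h2 : F k ≤ 2 * CE * t k ^ (-η) + 2 * A * t k ^ (-δ * ρs) := by linarith
  have hmono : t k ^ (-(δ * ρs)) ≤ t k ^ (-η) :=
    Real.rpow_le_rpow_of_exponent_le htk1 (by linarith)
  have h3 : F k ≤ (2 * CE + 2 * A) * t k ^ (-η) := by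
    have : 2 * A * t k ^ (-δ * ρs) ≤ 2 * A * t k ^ (-η) := by
      apply mul_le_mul_of_nonneg_left _ (by positivity)
      rw [show -δ * ρs = -(δ * ρs) by ring]
      exact hmono
    nlinarith [Real.rpow_nonneg htkpos.le (-η)]
  -- compare t k ^ (-η) with (k:ℝ) ^ (-η)
  have h4 : t k ^ (-η) ≤ θ ^ (-η) * (k : ℝ) ^ (-η) := by
    have hle : θ * (k : ℝ) ≤ t k := by
      rw [ht k]
      nlinarith
    have := Real.rpow_le_rpow_of_nonpos (by positivity) hle (neg_nonpos_of_nonneg hηpos.le)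
    rwa [Real.mul_rpow hθ.le hkpos.le] at this
  have hfinal : F k ≤ M * (k : ℝ) ^ (-η) := by
    calc F k ≤ (2 * CE + 2 * A) * t k ^ (-η) := h3
      _ ≤ (2 * CE + 2 * A) * (θ ^ (-η) * (k : ℝ) ^ (-η)) :=
          mul_le_mul_of_nonneg_left h4 hMpos.le
      _ = M * (k : ℝ) ^ (-η) := by rw [hM]; ring
  rw [Real.norm_eq_abs, Real.norm_eq_abs, abs_of_nonneg (hFnn k),
    abs_of_nonneg (Real.rpow_nonneg hkpos.le _)]
  exact hfinal
end
end

section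
/- In the setting of the general discrete descent lemma, if δ̂ > 1 (equivalently δ > η), then F_k = O(k^{−η}) as k → +∞. -/
open Filter Topology Metric MeasureTheory Asymptotics
open scoped Pointwise RealInnerProductSpace ENNReal NNReal

noncomputable section

variable {E : Type*} [NormedAddCommGroup E] [InnerProductSpace ℝ E] [CompleteSpace E]

/-- general discrete descent lemma, case `δ̂ > 1`: `F_k = O(k^{-η})`. -/
theorem descent_lemma_case_gt_one
    (η δhat δ β c θ γ : ℝ) (hη : η = 1 ∨ η = 2) (hδhat : 0 < δhat) (hδ : δ = η * δhat)
    (hβ : 0 < β) (hc : 0 < c)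
    (ε : ℕ → ℝ) (hε : ∀ k : ℕ, ε k = c / ((k : ℝ) + β) ^ δ)
    (hθ : 0 < θ) (hγ : 0 ≤ γ)
    (t : ℕ → ℝ) (ht : ∀ k : ℕ, t k = θ * ((k : ℝ) + γ))
    (F H V g ζ En : ℕ → ℝ) (Hstar : ℝ) (hHstar : 0 ≤ Hstar) (k0 : ℕ) (hk0 : 1 ≤ k0)
    (hEn : ∀ k : ℕ, 1 ≤ k → En k = t k ^ η * (F k + ε (k - 1) * H k) + V k)
    (hFnn : ∀ k : ℕ, k0 ≤ k → 0 ≤ F k)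
    (hHlb : ∀ k : ℕ, k0 ≤ k → -Hstar ≤ H k)
    (hVnn : ∀ k : ℕ, k0 ≤ k → 0 ≤ V k)
    (hgnn : ∀ k : ℕ, 0 ≤ g k)
    (C2 C1ζ C2ζ : ℝ) (hC2 : 0 ≤ C2) (hC1ζ : 0 < C1ζ) (hC2ζ : 0 < C2ζ)
    (hζ : ∀ k : ℕ, k0 ≤ k →
      C1ζ * (k : ℝ) ^ (η - 1) * ε (k - 1) ≤ ζ k ∧ ζ k ≤ C2ζ * (k : ℝ) ^ (η - 1) * ε k)
    (hmain : ∀ k : ℕ, k0 ≤ k →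
      En (k + 1) - En k + ζ k * H k + g k ≤ -(C2 * (k : ℝ) ^ (η - 1) * F k))
    (hδhat1 : 1 < δhat) :
    (fun k : ℕ => F k) =O[atTop] fun k : ℕ => (k : ℝ) ^ (-η) := by
  have hη1 : (1:ℝ) ≤ η := by rcases hη with h | h <;> rw [h] <;> norm_num
  have hηpos : (0:ℝ) < η := by linarith
  have hδη : η < δ := by rw [hδ]; nlinarith
  have hδpos : (0:ℝ) < δ := by linarith
  have hεpos : ∀ k : ℕ, 0 < ε k := fun k => by
    rw [hε]
    exact div_pos hc (Real.rpow_pos_of_pos (add_pos_of_nonneg_of_pos (Nat.cast_nonneg k) hβ) δ)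
  have hknn : ∀ k : ℕ, (0:ℝ) ≤ (k:ℝ) ^ (η - 1) := fun k => Real.rpow_nonneg (Nat.cast_nonneg k) _
  set a : ℕ → ℝ := fun k => C2ζ * (k:ℝ) ^ (η - 1) * ε k * Hstar with ha_def
  have hann : ∀ k, 0 ≤ a k := fun k =>
    mul_nonneg (mul_nonneg (mul_nonneg hC2ζ.le (hknn k)) (hεpos k).le) hHstar
  have hexp : η - 1 - δ < -1 := by linarith
  have hsum0 : Summable (fun k : ℕ => (k:ℝ) ^ (η - 1 - δ)) := Real.summable_nat_rpow.2 hexp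
  have hsum1 : Summable (fun k : ℕ => (C2ζ * c * Hstar) * (k:ℝ) ^ (η - 1 - δ)) := hsum0.mul_left _
  have hsum : Summable a := by
    rw [← summable_nat_add_iff 1]
    have hg : Summable (fun n : ℕ => (C2ζ * c * Hstar) * ((n + 1 : ℕ):ℝ) ^ (η - 1 - δ)) :=
      (summable_nat_add_iff (f := fun k : ℕ => (C2ζ * c * Hstar) * ((k : ℕ):ℝ) ^ (η - 1 - δ)) 1).2 hsum1
    refine Summable.of_nonneg_of_le (fun n => hann (n + 1)) ?_ hg
    intro k
    set n : ℝ := ((k + 1 : ℕ):ℝ) with hn_def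
    have hn0 : (0:ℝ) < n := by rw [hn_def]; exact_mod_cast Nat.succ_pos k
    have hd : n ^ δ ≤ (n + β) ^ δ := Real.rpow_le_rpow hn0.le (by linarith) hδpos.le
    have key : ε (k + 1) ≤ c / n ^ δ := by
      rw [hε]
      exact div_le_div_of_nonneg_left hc.le (Real.rpow_pos_of_pos hn0 δ) hd
    calc a (k + 1) = C2ζ * n ^ (η - 1) * ε (k + 1) * Hstar := by simp only [ha_def, hn_def]
      _ ≤ C2ζ * n ^ (η - 1) * (c / n ^ δ) * Hstar := by
          refine mul_le_mul_of_nonneg_right ?_ hHstar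
          exact mul_le_mul_of_nonneg_left key
            (mul_nonneg hC2ζ.le (Real.rpow_nonneg hn0.le _))
      _ = (C2ζ * c * Hstar) * n ^ (η - 1 - δ) := by
          have hsplit : n ^ (η - 1 - δ) = n ^ (η - 1) * (n ^ δ)⁻¹ := by
            rw [Real.rpow_sub hn0, div_eq_mul_inv]
          rw [hsplit, div_eq_mul_inv]
          ring
  have hstep : ∀ k, k0 ≤ k → En (k + 1) ≤ En k + a k := by
    intro k hk
    have h1 := hmain k hk
    have hζk := hζ k hk
    have hζnn : 0 ≤ ζ k :=
      le_trans (mul_nonneg (mul_nonneg hC1ζ.le (hknn k)) (hεpos _).le) hζk.1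
    have hHk := hHlb k hk
    have hFk := hFnn k hk
    have hgk := hgnn k
    have h2 : -(ζ k * H k) ≤ ζ k * Hstar := by nlinarith
    have h3 : ζ k * Hstar ≤ C2ζ * (k:ℝ) ^ (η - 1) * ε k * Hstar :=
      mul_le_mul_of_nonneg_right hζk.2 hHstar
    have h4 : 0 ≤ C2 * (k:ℝ) ^ (η - 1) * F k :=
      mul_nonneg (mul_nonneg hC2 (hknn k)) hFk
    simp only [ha_def]
    linarith
  have hEbound : ∀ k, k0 ≤ k → En k ≤ En k0 + ∑' j, a j := by
    have key : ∀ k, k0 ≤ k → En k ≤ En k0 + ∑ j ∈ Finset.Ico k0 k, a j := by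
      intro k hk
      induction k, hk using Nat.le_induction with
      | base => simp
      | succ n hn ih =>
        have hs := hstep n hn
        have hsum_step : ∑ j ∈ Finset.Ico k0 (n + 1), a j
            = (∑ j ∈ Finset.Ico k0 n, a j) + a n := Finset.sum_Ico_succ_top hn _
        linarith
    intro k hk
    refine le_trans (key k hk) (add_le_add_right ?_ _)
    exact Summable.sum_le_tsum _ (fun i _ => hann i) hsum
  set B : ℝ := En k0 + ∑' j, a j with hB_def
  have htpos : ∀ k : ℕ, 1 ≤ k → 0 < t k := by
    intro k hk
    rw [ht]
    have : (1:ℝ) ≤ (k:ℝ) := by exact_mod_cast hk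
    nlinarith
  have hFb : ∀ k, k0 ≤ k → F k ≤ B / t k ^ η + ε (k - 1) * Hstar := by
    intro k hk
    have hk1 : 1 ≤ k := le_trans hk0 hk
    have htk := htpos k hk1
    have htη : (0:ℝ) < t k ^ η := Real.rpow_pos_of_pos htk η
    have hE := hEn k hk1
    have hHk := hHlb k hk
    have hVk := hVnn k hk
    have hεk := (hεpos (k - 1)).le
    have hEB := hEbound k hk
    have hexpand : t k ^ η * F k = En k - V k - t k ^ η * (ε (k - 1) * H k) := by
      rw [hE]; ring
    have h2 : t k ^ η * (ε (k - 1) * (-H k)) ≤ t k ^ η * (ε (k - 1) * Hstar) := by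
      refine mul_le_mul_of_nonneg_left ?_ htη.le
      exact mul_le_mul_of_nonneg_left (by linarith) hεk
    have h1 : t k ^ η * F k ≤ B + t k ^ η * (ε (k - 1) * Hstar) := by
      rw [hexpand]
      linarith [h2, hEB, hVk]
    have h3 : F k ≤ (B + t k ^ η * (ε (k - 1) * Hstar)) / t k ^ η := by
      rw [le_div_iff₀ htη]
      linarith
    calc F k ≤ (B + t k ^ η * (ε (k - 1) * Hstar)) / t k ^ η := h3
      _ = B / t k ^ η + ε (k - 1) * Hstar := by
          rw [add_div, mul_div_cancel_left₀ _ htη.ne']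
  rw [Asymptotics.isBigO_iff]
  refine ⟨|B| / θ ^ η + c * 2 ^ δ * Hstar, ?_⟩
  filter_upwards [eventually_ge_atTop (max k0 2)] with k hk
  have hk0' : k0 ≤ k := le_trans (le_max_left _ _) hk
  have hk2 : 2 ≤ k := le_trans (le_max_right _ _) hk
  have hk2' : (2:ℝ) ≤ (k:ℝ) := by exact_mod_cast hk2
  have hk1 : (1:ℝ) ≤ (k:ℝ) := by linarith
  have hkpos : (0:ℝ) < (k:ℝ) := by linarith
  have htη : (0:ℝ) < t k ^ η := Real.rpow_pos_of_pos (htpos k (by omega)) η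
  have hθη : (0:ℝ) < θ ^ η := Real.rpow_pos_of_pos hθ η
  have hkη : (0:ℝ) < (k:ℝ) ^ η := Real.rpow_pos_of_pos hkpos η
  have htlow : θ ^ η * (k:ℝ) ^ η ≤ t k ^ η := by
    rw [ht, ← Real.mul_rpow hθ.le hkpos.le]
    exact Real.rpow_le_rpow (by positivity) (by nlinarith) hηpos.le
  have hA : B / t k ^ η ≤ (|B| / θ ^ η) * (k:ℝ) ^ (-η) := by
    calc B / t k ^ η ≤ |B| / t k ^ η := (div_le_div_iff_of_pos_right htη).2 (le_abs_self B)
      _ = |B| * (t k ^ η)⁻¹ := div_eq_mul_inv _ _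
      _ ≤ |B| * (θ ^ η * (k:ℝ) ^ η)⁻¹ :=
          mul_le_mul_of_nonneg_left (inv_anti₀ (by positivity) htlow) (abs_nonneg B)
      _ = (|B| / θ ^ η) * (k:ℝ) ^ (-η) := by
          rw [Real.rpow_neg hkpos.le, mul_inv, div_eq_mul_inv]; ring
  have hεb : ε (k - 1) ≤ c * 2 ^ δ * (k:ℝ) ^ (-η) := by
    have hkm : ((k - 1 : ℕ):ℝ) = (k:ℝ) - 1 := by
      rw [Nat.cast_sub (by omega : 1 ≤ k)]; norm_num
    rw [hε, hkm]
    have hhalf : (k:ℝ) / 2 ≤ (k:ℝ) - 1 + β := by linarith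
    have hd1 : ((k:ℝ) / 2) ^ δ ≤ ((k:ℝ) - 1 + β) ^ δ :=
      Real.rpow_le_rpow (by positivity) hhalf hδpos.le
    have hd2 : ((k:ℝ) / 2) ^ δ = (k:ℝ) ^ δ / 2 ^ δ :=
      Real.div_rpow hkpos.le (by norm_num : (0:ℝ) ≤ 2) δ
    have hd3 : (k:ℝ) ^ η ≤ (k:ℝ) ^ δ := Real.rpow_le_rpow_of_exponent_le hk1 hδη.le
    have h2δ : (0:ℝ) < 2 ^ δ := Real.rpow_pos_of_pos (by norm_num) δ
    have h1 : c / ((k:ℝ) - 1 + β) ^ δ ≤ c / (((k:ℝ) / 2) ^ δ) :=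
      div_le_div_of_nonneg_left hc.le (by positivity) hd1
    have h2 : c / (((k:ℝ) / 2) ^ δ) = c * 2 ^ δ / (k:ℝ) ^ δ := by
      rw [hd2, div_div_eq_mul_div]
    have h3 : c * 2 ^ δ / (k:ℝ) ^ δ ≤ c * 2 ^ δ / (k:ℝ) ^ η :=
      div_le_div_of_nonneg_left (by positivity) hkη hd3
    have h4 : c * 2 ^ δ / (k:ℝ) ^ η = c * 2 ^ δ * (k:ℝ) ^ (-η) := by
      rw [Real.rpow_neg hkpos.le, div_eq_mul_inv]
    linarith
  have hF := hFb k hk0'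
  have hεH : ε (k - 1) * Hstar ≤ (c * 2 ^ δ * Hstar) * (k:ℝ) ^ (-η) := by
    have := mul_le_mul_of_nonneg_right hεb hHstar
    nlinarith
  have hknη : (0:ℝ) ≤ (k:ℝ) ^ (-η) := Real.rpow_nonneg hkpos.le _
  rw [Real.norm_eq_abs, Real.norm_eq_abs, abs_of_nonneg (hFnn k hk0'), abs_of_nonneg hknη]
  calc F k ≤ B / t k ^ η + ε (k - 1) * Hstar := hF
    _ ≤ (|B| / θ ^ η) * (k:ℝ) ^ (-η) + (c * 2 ^ δ * Hstar) * (k:ℝ) ^ (-η) := by linarith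
    _ = (|B| / θ ^ η + c * 2 ^ δ * Hstar) * (k:ℝ) ^ (-η) := by ring
end
end

section
/- In the setting of the general discrete descent lemma, suppose δ̂ = 1, C_2 > 0, and condition (C2) holds: for each r > 0 there is a nonnegative summable sequence (I_k^r) with −k^{η−1}(F_k + r ε_k H_k) ≤ I_k^r for all k ≥ k_0. Then: (i) lim_{k→∞} E_k exists; (ii) F_k = O(k^{−η}) as k → +∞; (iii) Σ_k k^{η−1} F_k < +∞, Σ_k k^{η−1} ε_{k−1} |H_k| < +∞, and Σ_k g_k < +∞. -/
open Filter Topology Metric MeasureTheory Asymptotics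
open scoped Pointwise RealInnerProductSpace ENNReal NNReal

noncomputable section

variable {E : Type*} [NormedAddCommGroup E] [InnerProductSpace ℝ E] [CompleteSpace E]

set_option maxHeartbeats 1600000 in
/-- general discrete descent lemma, case `δ̂ = 1` under condition (C2). -/
theorem descent_lemma_case_eq_one
    (η δhat δ β c θ γ : ℝ) (hη : η = 1 ∨ η = 2) (hδhat : 0 < δhat) (hδ : δ = η * δhat)
    (hβ : 0 < β) (hc : 0 < c)
    (ε : ℕ → ℝ) (hε : ∀ k : ℕ, ε k = c / ((k : ℝ) + β) ^ δ)
    (hθ : 0 < θ) (hγ : 0 ≤ γ)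
    (t : ℕ → ℝ) (ht : ∀ k : ℕ, t k = θ * ((k : ℝ) + γ))
    (F H V g ζ En : ℕ → ℝ) (Hstar : ℝ) (hHstar : 0 ≤ Hstar) (k0 : ℕ) (hk0 : 1 ≤ k0)
    (hEn : ∀ k : ℕ, 1 ≤ k → En k = t k ^ η * (F k + ε (k - 1) * H k) + V k)
    (hFnn : ∀ k : ℕ, k0 ≤ k → 0 ≤ F k)
    (hHlb : ∀ k : ℕ, k0 ≤ k → -Hstar ≤ H k)
    (hVnn : ∀ k : ℕ, k0 ≤ k → 0 ≤ V k)
    (hgnn : ∀ k : ℕ, 0 ≤ g k)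
    (C2 C1ζ C2ζ : ℝ) (hC2 : 0 ≤ C2) (hC1ζ : 0 < C1ζ) (hC2ζ : 0 < C2ζ)
    (hζ : ∀ k : ℕ, k0 ≤ k →
      C1ζ * (k : ℝ) ^ (η - 1) * ε (k - 1) ≤ ζ k ∧ ζ k ≤ C2ζ * (k : ℝ) ^ (η - 1) * ε k)
    (hmain : ∀ k : ℕ, k0 ≤ k →
      En (k + 1) - En k + ζ k * H k + g k ≤ -(C2 * (k : ℝ) ^ (η - 1) * F k))
    (hδhat1 : δhat = 1) (hC2pos : 0 < C2)
    (hcond2 : ∀ r : ℝ, 0 < r → ∃ I : ℕ → ℝ, (∀ k : ℕ, 0 ≤ I k) ∧ Summable I ∧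
      ∀ k : ℕ, k0 ≤ k → -((k : ℝ) ^ (η - 1) * (F k + r * ε k * H k)) ≤ I k)
    :
    (∃ l : ℝ, Tendsto En atTop (𝓝 l)) ∧
    ((fun k : ℕ => F k) =O[atTop] fun k : ℕ => (k : ℝ) ^ (-η)) ∧
    Summable (fun k : ℕ => (k : ℝ) ^ (η - 1) * F k) ∧
    Summable (fun k : ℕ => (k : ℝ) ^ (η - 1) * ε (k - 1) * |H k|) ∧
    Summable g := by
  -- basic positivity facts
  have hη1 : 1 ≤ η := by rcases hη with h | h <;> rw [h] <;> norm_num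
  have hηpos : (0:ℝ) < η := by linarith
  have hδη : δ = η := by rw [hδ, hδhat1, mul_one]
  have hε' : ∀ k : ℕ, ε k = c / ((k : ℝ) + β) ^ η := fun k => by rw [hε, hδη]
  have hεpos : ∀ k : ℕ, 0 < ε k := by
    intro k; rw [hε' k]
    exact div_pos hc (Real.rpow_pos_of_pos (add_pos_of_nonneg_of_pos (Nat.cast_nonneg k) hβ) _)
  have hxnn : ∀ k : ℕ, 0 ≤ (k : ℝ) ^ (η - 1) := fun k => Real.rpow_nonneg (Nat.cast_nonneg k) _
  have hζnn : ∀ k, k0 ≤ k → 0 ≤ ζ k := fun k hk =>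
    le_trans (mul_nonneg (mul_nonneg hC1ζ.le (hxnn k)) (hεpos _).le) (hζ k hk).1
  have htnn : ∀ k : ℕ, 0 ≤ t k := fun k => by
    rw [ht]; exact mul_nonneg hθ.le (add_nonneg (Nat.cast_nonneg k) hγ)
  have htη : ∀ k : ℕ, 0 ≤ t k ^ η := fun k => Real.rpow_nonneg (htnn k) η
  set Cr : ℝ := 1 + (1 + γ) / β with hCrdef
  have hCrpos : 0 < Cr := add_pos_of_pos_of_nonneg one_pos (div_nonneg (by linarith) hβ.le)
  set Mb : ℝ := θ ^ η * Cr ^ η * c with hMbdef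
  have hMbnn : 0 ≤ Mb :=
    mul_nonneg (mul_nonneg (Real.rpow_nonneg hθ.le _) (Real.rpow_nonneg hCrpos.le _)) hc.le
  -- bound on t k ^ η * ε (k-1)
  have haux : ∀ k : ℕ, 1 ≤ k → t k ^ η * ε (k - 1) ≤ Mb := by
    intro k hk
    obtain ⟨m, rfl⟩ := Nat.exists_eq_add_of_le hk
    have hsub : 1 + m - 1 = m := by omega
    rw [hsub, ht, hε']
    have hc1 : ((1 + m : ℕ) : ℝ) = (m : ℝ) + 1 := by push_cast; ring
    rw [hc1]
    have hb : (0:ℝ) < (m : ℝ) + β := add_pos_of_nonneg_of_pos (Nat.cast_nonneg m) hβ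
    have hmnn : (0:ℝ) ≤ (m : ℝ) := Nat.cast_nonneg m
    have hle : (m : ℝ) + 1 + γ ≤ Cr * ((m : ℝ) + β) := by
      rw [hCrdef]
      have expand : (1 + (1 + γ) / β) * ((m : ℝ) + β)
          = ((m : ℝ) + β) + ((1 + γ) * (m : ℝ) / β + (1 + γ)) := by
        field_simp
      rw [expand]
      have hnn : 0 ≤ (1 + γ) * (m : ℝ) / β :=
        div_nonneg (mul_nonneg (by linarith) hmnn) hβ.le
      linarith
    have h3 : (θ * ((m : ℝ) + 1 + γ)) ^ η ≤ θ ^ η * (Cr ^ η * ((m : ℝ) + β) ^ η) := by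
      rw [Real.mul_rpow hθ.le (by linarith), ← Real.mul_rpow hCrpos.le hb.le]
      exact mul_le_mul_of_nonneg_left
        (Real.rpow_le_rpow (by linarith) hle hηpos.le) (Real.rpow_nonneg hθ.le η)
    have hbη : (0:ℝ) < ((m : ℝ) + β) ^ η := Real.rpow_pos_of_pos hb η
    calc (θ * ((m : ℝ) + 1 + γ)) ^ η * (c / ((m : ℝ) + β) ^ η)
        ≤ θ ^ η * (Cr ^ η * ((m : ℝ) + β) ^ η) * (c / ((m : ℝ) + β) ^ η) :=
          mul_le_mul_of_nonneg_right h3 (div_nonneg hc.le hbη.le)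
      _ = Mb := by rw [hMbdef]; field_simp
  -- lower bound on the H-term and on En
  have hεH : ∀ k, k0 ≤ k → -(Mb * Hstar) ≤ t k ^ η * ε (k - 1) * H k := by
    intro k hk
    have hk1 : 1 ≤ k := le_trans hk0 hk
    have ha1 : 0 ≤ t k ^ η * ε (k - 1) := mul_nonneg (htη k) (hεpos _).le
    have ha2 := haux k hk1
    have ha3 := hHlb k hk
    nlinarith [mul_nonneg ha1 (by linarith : (0:ℝ) ≤ H k + Hstar),
      mul_nonneg (by linarith : (0:ℝ) ≤ Mb - t k ^ η * ε (k - 1)) hHstar]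
  have hEnlb : ∀ k, k0 ≤ k → -(Mb * Hstar) ≤ En k := by
    intro k hk
    rw [hEn k (le_trans hk0 hk)]
    have h1 := hεH k hk
    have h2 := mul_nonneg (htη k) (hFnn k hk)
    have h3 := hVnn k hk
    nlinarith
  -- condition (C2) with r = 2 C2ζ / C2
  obtain ⟨I, hInn, hIsum, hIineq⟩ := hcond2 (2 * C2ζ / C2) (div_pos (by linarith) hC2pos)
  have hcr : C2 / 2 * (2 * C2ζ / C2) = C2ζ := by field_simp
  -- key pointwise lower bound on ζ k * H k
  have hA : ∀ k, k0 ≤ k →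
      -(C2 / 2 * ((k : ℝ) ^ (η - 1) * F k) + C2 / 2 * I k) ≤ ζ k * H k := by
    intro k hk
    have hx := hxnn k
    have he := (hεpos k).le
    rcases le_or_gt 0 (H k) with hH | hH
    · have h1 : 0 ≤ ζ k * H k := mul_nonneg (hζnn k hk) hH
      have h2 : 0 ≤ C2 / 2 * ((k : ℝ) ^ (η - 1) * F k) :=
        mul_nonneg (by linarith) (mul_nonneg hx (hFnn k hk))
      have h3 : 0 ≤ C2 / 2 * I k := mul_nonneg (by linarith) (hInn k)
      linarith
    · have h1 : C2ζ * (k : ℝ) ^ (η - 1) * ε k * H k ≤ ζ k * H k :=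
        mul_le_mul_of_nonpos_right (hζ k hk).2 hH.le
      have h2 := hIineq k hk
      have h3 := mul_le_mul_of_nonneg_left h2 (by linarith : (0:ℝ) ≤ C2 / 2)
      have key : -(C2 / 2 * ((k : ℝ) ^ (η - 1) * F k))
          - (C2 / 2 * (2 * C2ζ / C2)) * ((k : ℝ) ^ (η - 1) * ε k * H k) ≤ C2 / 2 * I k := by
        linarith [h3]
      rw [hcr] at key
      linarith
  -- the decrement quantity
  set D : ℕ → ℝ := fun k => ζ k * H k + g k + C2 * ((k : ℝ) ^ (η - 1) * F k) with hD
  have hrec : ∀ k, k0 ≤ k → En (k + 1) + D k ≤ En k := by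
    intro k hk
    have := hmain k hk
    simp only [hD]
    linarith
  have hsumEn : ∀ n : ℕ, En (k0 + n) + ∑ j ∈ Finset.range n, D (k0 + j) ≤ En k0 := by
    intro n
    induction n with
    | zero => simp
    | succ n ih =>
      rw [Finset.sum_range_succ]
      have h1 := hrec (k0 + n) (Nat.le_add_right _ _)
      have h2 : k0 + (n + 1) = (k0 + n) + 1 := rfl
      rw [h2]
      linarith
  -- shifted I is summable
  have hIshift : Summable (fun j => I (k0 + j)) :=
    ((summable_nat_add_iff k0).mpr hIsum).congr fun n => by rw [add_comm]
  set TI : ℝ := ∑' j, I (k0 + j) with hTI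
  have hIpartial : ∀ n, ∑ j ∈ Finset.range n, I (k0 + j) ≤ TI := fun n =>
    Summable.sum_le_tsum _ (fun i _ => hInn _) hIshift
  -- the shifted nonnegative sequence φ
  set φ : ℕ → ℝ := fun j => D (k0 + j) + C2 / 2 * I (k0 + j) with hφ
  have hxFnn : ∀ k, k0 ≤ k → 0 ≤ (k : ℝ) ^ (η - 1) * F k := fun k hk =>
    mul_nonneg (hxnn k) (hFnn k hk)
  have hφnn : ∀ j, 0 ≤ φ j := by
    intro j
    have h1 := hA (k0 + j) (Nat.le_add_right _ _)
    have h2 := hgnn (k0 + j)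
    have h3 := hxFnn (k0 + j) (Nat.le_add_right _ _)
    have h5 := mul_nonneg hC2 h3
    simp only [hφ, hD]
    linarith
  have hφsum : Summable φ := by
    apply summable_of_sum_range_le hφnn (c := En k0 + Mb * Hstar + C2 / 2 * TI)
    intro n
    have h1 := hsumEn n
    have h2 := hEnlb (k0 + n) (Nat.le_add_right _ _)
    have h3 := mul_le_mul_of_nonneg_left (hIpartial n) (by linarith : (0:ℝ) ≤ C2 / 2)
    have h4 : ∑ j ∈ Finset.range n, φ j
        = (∑ j ∈ Finset.range n, D (k0 + j)) + C2 / 2 * ∑ j ∈ Finset.range n, I (k0 + j) := by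
      simp only [hφ]
      rw [Finset.sum_add_distrib, Finset.mul_sum]
    rw [h4]
    linarith
  -- summability of the shifted pieces
  have hgshift : Summable (fun j => g (k0 + j)) := by
    apply Summable.of_nonneg_of_le (fun j => hgnn _) _ hφsum
    intro j
    have h1 := hA (k0 + j) (Nat.le_add_right _ _)
    have h3 := hxFnn (k0 + j) (Nat.le_add_right _ _)
    have h5 := mul_nonneg hC2 h3
    simp only [hφ, hD]
    linarith
  have hxFhalf : Summable (fun j => C2 / 2 * (((k0 + j : ℕ) : ℝ) ^ (η - 1) * F (k0 + j))) := by
    apply Summable.of_nonneg_of_le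
      (fun j => mul_nonneg (by linarith) (hxFnn _ (Nat.le_add_right _ _))) _ hφsum
    intro j
    have h1 := hA (k0 + j) (Nat.le_add_right _ _)
    have h2 := hgnn (k0 + j)
    have h3 := hxFnn (k0 + j) (Nat.le_add_right _ _)
    have h5 := mul_nonneg hC2 h3
    simp only [hφ, hD]
    linarith
  have hxFshift : Summable (fun j => ((k0 + j : ℕ) : ℝ) ^ (η - 1) * F (k0 + j)) := by
    have h := hxFhalf.mul_left (C2 / 2)⁻¹
    exact h.congr fun j => inv_mul_cancel_left₀ (by positivity) _
  have hζHshift : Summable (fun j => ζ (k0 + j) * H (k0 + j)) := by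
    have h := ((hφsum.sub hgshift).sub (hxFshift.mul_left C2)).sub (hIshift.mul_left (C2 / 2))
    exact h.congr fun j => by simp only [hφ, hD]; ring
  have habs : Summable (fun j => |ζ (k0 + j) * H (k0 + j)|) := by
    apply Summable.of_nonneg_of_le (fun j => abs_nonneg _) _
      (hζHshift.add ((hxFshift.mul_left C2).add (hIshift.mul_left C2)))
    intro j
    have h1 := hA (k0 + j) (Nat.le_add_right _ _)
    have h3 := hxFnn (k0 + j) (Nat.le_add_right _ _)
    have h4 := hInn (k0 + j)
    have h5 := mul_nonneg hC2 h3
    have h6 := mul_nonneg hC2 h4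
    rcases abs_cases (ζ (k0 + j) * H (k0 + j)) with ⟨he, _⟩ | ⟨he, _⟩ <;> rw [he] <;> linarith
  -- summability of shifted D
  have hDshift : Summable (fun j => D (k0 + j)) := by
    have h := hφsum.sub (hIshift.mul_left (C2 / 2))
    exact h.congr fun j => by simp only [hφ]; ring
  -- convergence of En
  set a : ℕ → ℝ := fun n => En (k0 + n) + ∑ j ∈ Finset.range n, D (k0 + j) with ha
  have hanti : ∀ n, a (n + 1) ≤ a n := by
    intro n
    simp only [ha]
    rw [Finset.sum_range_succ]
    have h1 := hrec (k0 + n) (Nat.le_add_right _ _)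
    have h2 : k0 + (n + 1) = (k0 + n) + 1 := rfl
    rw [h2]
    linarith
  have hsumdecomp : ∀ n : ℕ, ∑ j ∈ Finset.range n, φ j
      = (∑ j ∈ Finset.range n, D (k0 + j)) + C2 / 2 * ∑ j ∈ Finset.range n, I (k0 + j) := by
    intro n
    simp only [hφ]
    rw [Finset.sum_add_distrib, Finset.mul_sum]
  have hbdd : BddBelow (Set.range a) := by
    refine ⟨-(Mb * Hstar) - C2 / 2 * TI, ?_⟩
    rintro x ⟨n, rfl⟩
    simp only [ha]
    have h1 := hEnlb (k0 + n) (Nat.le_add_right _ _)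
    have h2 : 0 ≤ ∑ j ∈ Finset.range n, φ j := Finset.sum_nonneg fun j _ => hφnn j
    have h4 := hsumdecomp n
    have h5 := mul_le_mul_of_nonneg_left (hIpartial n) (by linarith : (0:ℝ) ≤ C2 / 2)
    linarith
  have hatend : Tendsto a atTop (𝓝 (⨅ n, a n)) :=
    tendsto_atTop_ciInf (antitone_nat_of_succ_le hanti) hbdd
  have hStend : Tendsto (fun n => ∑ j ∈ Finset.range n, D (k0 + j)) atTop
      (𝓝 (∑' j, D (k0 + j))) := hDshift.hasSum.tendsto_sum_nat
  have hEntend : Tendsto (fun n => En (k0 + n)) atTop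
      (𝓝 ((⨅ n, a n) - ∑' j, D (k0 + j))) := by
    have h := hatend.sub hStend
    exact h.congr fun n => by simp only [ha]; ring
  -- upper bound on En and on F
  have hEnub : ∀ n : ℕ, En (k0 + n) ≤ En k0 + C2 / 2 * TI := by
    intro n
    have h1 := hsumEn n
    have h2 : 0 ≤ ∑ j ∈ Finset.range n, φ j := Finset.sum_nonneg fun j _ => hφnn j
    have h4 := hsumdecomp n
    have h5 := mul_le_mul_of_nonneg_left (hIpartial n) (by linarith : (0:ℝ) ≤ C2 / 2)
    linarith
  set B2 : ℝ := En k0 + C2 / 2 * TI + Mb * Hstar with hB2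
  have hFb : ∀ k, k0 ≤ k → θ ^ η * (k : ℝ) ^ η * F k ≤ B2 := by
    intro k hk
    obtain ⟨n, rfl⟩ := Nat.exists_eq_add_of_le hk
    have hk1 : 1 ≤ k0 + n := le_trans hk0 (Nat.le_add_right _ _)
    have h1 : t (k0 + n) ^ η * F (k0 + n) ≤ En (k0 + n) + Mb * Hstar := by
      have hE := hEn (k0 + n) hk1
      have h2 := hεH (k0 + n) (Nat.le_add_right _ _)
      have h3 := hVnn (k0 + n) (Nat.le_add_right _ _)
      linarith [hE, h2, h3]
    have h2 : θ ^ η * ((k0 + n : ℕ) : ℝ) ^ η ≤ t (k0 + n) ^ η := by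
      rw [ht, ← Real.mul_rpow hθ.le (Nat.cast_nonneg _)]
      refine Real.rpow_le_rpow (mul_nonneg hθ.le (Nat.cast_nonneg _)) ?_ hηpos.le
      have := Nat.cast_nonneg (α := ℝ) (k0 + n)
      nlinarith
    have h3 := hFnn (k0 + n) (Nat.le_add_right _ _)
    have h4 := mul_le_mul_of_nonneg_right h2 h3
    have h5 := hEnub n
    rw [hB2]
    linarith
  refine ⟨⟨(⨅ n, a n) - ∑' j, D (k0 + j),
      (tendsto_add_atTop_iff_nat k0).mp (hEntend.congr fun n => by rw [Nat.add_comm])⟩,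
    ?_, ?_, ?_, ?_⟩
  · -- big O
    rw [Asymptotics.isBigO_iff]
    refine ⟨B2 / θ ^ η, ?_⟩
    filter_upwards [eventually_ge_atTop k0] with k hk
    have hk1 : 1 ≤ k := le_trans hk0 hk
    have hkpos : (0:ℝ) < (k : ℝ) := by exact_mod_cast hk1
    have hkη : (0:ℝ) < (k : ℝ) ^ η := Real.rpow_pos_of_pos hkpos η
    have hθη : (0:ℝ) < θ ^ η := Real.rpow_pos_of_pos hθ η
    rw [Real.norm_eq_abs, Real.norm_eq_abs, abs_of_nonneg (hFnn k hk),
      Real.rpow_neg hkpos.le, abs_of_pos (inv_pos.mpr hkη)]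
    have h1 := hFb k hk
    rw [div_mul_eq_mul_div, le_div_iff₀ hθη, ← div_eq_mul_inv, le_div_iff₀ hkη]
    nlinarith [h1]
  · -- Summable k^(η-1) F k
    exact (summable_nat_add_iff k0).mp (hxFshift.congr fun n => by rw [Nat.add_comm k0 n])
  · -- Summable k^(η-1) ε(k-1) |H k|
    have hεHshift : Summable
        (fun j => ((k0 + j : ℕ) : ℝ) ^ (η - 1) * ε (k0 + j - 1) * |H (k0 + j)|) := by
      apply Summable.of_nonneg_of_le
        (fun j => mul_nonneg (mul_nonneg (hxnn _) (hεpos _).le) (abs_nonneg _)) _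
        (habs.mul_left C1ζ⁻¹)
      intro j
      have hk : k0 ≤ k0 + j := Nat.le_add_right _ _
      have h5 : C1ζ * (((k0 + j : ℕ) : ℝ) ^ (η - 1) * ε (k0 + j - 1) * |H (k0 + j)|)
          ≤ |ζ (k0 + j) * H (k0 + j)| := by
        have h6 := mul_le_mul_of_nonneg_right (hζ (k0 + j) hk).1 (abs_nonneg (H (k0 + j)))
        rw [abs_mul, abs_of_nonneg (hζnn (k0 + j) hk)]
        nlinarith [h6]
      calc ((k0 + j : ℕ) : ℝ) ^ (η - 1) * ε (k0 + j - 1) * |H (k0 + j)|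
          = C1ζ⁻¹ * (C1ζ * (((k0 + j : ℕ) : ℝ) ^ (η - 1) * ε (k0 + j - 1) * |H (k0 + j)|)) :=
            (inv_mul_cancel_left₀ hC1ζ.ne' _).symm
        _ ≤ C1ζ⁻¹ * |ζ (k0 + j) * H (k0 + j)| :=
            mul_le_mul_of_nonneg_left h5 (inv_nonneg.mpr hC1ζ.le)
    exact (summable_nat_add_iff k0).mp (hεHshift.congr fun n => by rw [Nat.add_comm k0 n])
  · -- Summable g
    exact (summable_nat_add_iff k0).mp (hgshift.congr fun n => by rw [Nat.add_comm k0 n])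
end
end

section
/- In the setting of the general discrete descent lemma, suppose 1/ρ* < δ̂ < 1, C_2 > 0, condition (C1) holds: −H_k ≤ C_3 F_k^{1/ρ} for all k ≥ k_0 with C_3 ≥ 0 and ρ ∈ (1,2] (and 1/ρ + 1/ρ* = 1), and condition (C2) holds: for each r > 0 there is a nonnegative summable sequence (I_k^r) with −k^{η−1}(F_k + r ε_k H_k) ≤ I_k^r for all k ≥ k_0. Then: (i) F_k = O(k^{−η}) as k → +∞; (ii) there is C_H ≥ 0 with −C_H k^{−δ + η/ρ*} ≤ t_k^η ε_{k−1} H_k for all k ≥ k_0; (iii) lim_{k→∞} E_k exists; (iv) Σ_k k^{η−1} F_k < +∞, Σ_k k^{η−1} ε_{k−1} |H_k| < +∞, and Σ_k g_k < +∞. -/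
open Filter Topology Metric MeasureTheory Asymptotics
open scoped Pointwise RealInnerProductSpace ENNReal NNReal

noncomputable section

variable {E : Type*} [NormedAddCommGroup E] [InnerProductSpace ℝ E] [CompleteSpace E]

private lemma young_aux {ρ ρs : ℝ} (hconj : ρ.HolderConjugate ρs) {lam : ℝ} (hlam : 0 < lam) :
    ∃ D : ℝ, 0 ≤ D ∧ ∀ a b : ℝ, 0 ≤ a → 0 ≤ b → a * b ≤ lam * a ^ ρ + D * b ^ ρs := by
  have hρpos : 0 < ρ := hconj.pos
  have hρspos : 0 < ρs := hconj.symm.pos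
  set s : ℝ := (lam * ρ) ^ (1 / ρ) with hs
  have hspos : 0 < s := Real.rpow_pos_of_pos (by positivity) _
  have hsρs : 0 < s ^ ρs := Real.rpow_pos_of_pos hspos _
  refine ⟨(s ^ ρs * ρs)⁻¹, by positivity, ?_⟩
  intro a b ha hb
  have h := Real.young_inequality_of_nonneg (mul_nonneg hspos.le ha)
    (div_nonneg hb hspos.le) hconj
  have h1 : s * a * (b / s) = a * b := by field_simp
  have h2 : (s * a) ^ ρ = s ^ ρ * a ^ ρ := Real.mul_rpow hspos.le ha
  have h3 : s ^ ρ = lam * ρ := by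
    rw [hs, ← Real.rpow_mul (by positivity), one_div_mul_cancel hρpos.ne', Real.rpow_one]
  have h4 : (b / s) ^ ρs = b ^ ρs / s ^ ρs := Real.div_rpow hb hspos.le _
  rw [h1, h2, h3, h4] at h
  have e1 : lam * ρ * a ^ ρ / ρ = lam * a ^ ρ := by field_simp
  have e2 : b ^ ρs / s ^ ρs / ρs = (s ^ ρs * ρs)⁻¹ * b ^ ρs := by
    rw [div_div, inv_mul_eq_div]
  rw [e1, e2] at h
  exact h

private lemma young_split {ρ ρs : ℝ} (hconj : ρ.HolderConjugate ρs) {lam : ℝ} (hlam : 0 < lam) :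
    ∃ D : ℝ, 0 ≤ D ∧ ∀ x F e : ℝ, 0 < x → 0 ≤ F → 0 ≤ e →
      x * e * F ^ (1 / ρ) ≤ lam * (x * F) + D * (x * e ^ ρs) := by
  obtain ⟨D, hD0, hD⟩ := young_aux hconj hlam
  have hρpos : 0 < ρ := hconj.pos
  have hρspos : 0 < ρs := hconj.symm.pos
  refine ⟨D, hD0, ?_⟩
  intro x F e hx hF he
  have ha : (0:ℝ) ≤ x ^ (1/ρ) * F ^ (1/ρ) :=
    mul_nonneg (Real.rpow_nonneg hx.le _) (Real.rpow_nonneg hF _)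
  have hb : (0:ℝ) ≤ x ^ (1/ρs) * e :=
    mul_nonneg (Real.rpow_nonneg hx.le _) he
  have key := hD _ _ ha hb
  have hxsplit : x ^ (1/ρ) * x ^ (1/ρs) = x := by
    rw [← Real.rpow_add hx, one_div, one_div, hconj.inv_add_inv_eq_one, Real.rpow_one]
  have hab : x ^ (1/ρ) * F ^ (1/ρ) * (x ^ (1/ρs) * e) = x * e * F ^ (1/ρ) := by
    calc x ^ (1/ρ) * F ^ (1/ρ) * (x ^ (1/ρs) * e)
        = (x ^ (1/ρ) * x ^ (1/ρs)) * e * F ^ (1/ρ) := by ring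
      _ = x * e * F ^ (1/ρ) := by rw [hxsplit]
  have haρ : (x ^ (1/ρ) * F ^ (1/ρ)) ^ ρ = x * F := by
    rw [Real.mul_rpow (Real.rpow_nonneg hx.le _) (Real.rpow_nonneg hF _),
      ← Real.rpow_mul hx.le, ← Real.rpow_mul hF, one_div_mul_cancel hρpos.ne',
      Real.rpow_one, Real.rpow_one]
  have hbρs : (x ^ (1/ρs) * e) ^ ρs = x * e ^ ρs := by
    rw [Real.mul_rpow (Real.rpow_nonneg hx.le _) he,
      ← Real.rpow_mul hx.le, one_div_mul_cancel hρspos.ne', Real.rpow_one]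
  rw [hab, haρ, hbρs] at key
  exact key

private lemma summable_of_le_of_le {f h : ℕ → ℝ} {k1 : ℕ} (h0 : ∀ k, k1 ≤ k → 0 ≤ f k)
    (hle : ∀ k, k1 ≤ k → f k ≤ h k) (hh : Summable h) : Summable f := by
  rw [← summable_nat_add_iff k1]
  refine Summable.of_nonneg_of_le (fun n => h0 _ (Nat.le_add_left _ _))
    (fun n => hle _ (Nat.le_add_left _ _)) ?_
  exact (summable_nat_add_iff k1).2 hh

private lemma summable_of_rpow_bound {f : ℕ → ℝ} {K p : ℝ} (hp : p < -1)
    (h0 : ∀ k, 0 ≤ f k) (h : ∀ k : ℕ, 1 ≤ k → f k ≤ K * (k:ℝ) ^ p) : Summable f :=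
  summable_of_le_of_le (k1 := 1) (fun k _ => h0 k) h
    ((Real.summable_nat_rpow.2 hp).mul_left K)

private lemma aux_summable_of_telescope {W Eseq v : ℕ → ℝ} {k0 : ℕ} {B : ℝ}
    (hW0 : ∀ k, k0 ≤ k → 0 ≤ W k)
    (hWle : ∀ k, k0 ≤ k → W k ≤ Eseq k - Eseq (k+1) + v k)
    (hv : ∀ k, 0 ≤ v k) (hvs : Summable v)
    (hlb : ∀ k, k0 ≤ k → B ≤ Eseq k) :
    Summable W := by
  have hvs' : Summable (fun i => v (i + k0)) := (summable_nat_add_iff k0).2 hvs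
  rw [← summable_nat_add_iff k0]
  apply summable_of_sum_range_le (c := Eseq k0 - B + ∑' i, v (i + k0))
  · intro n; exact hW0 _ (Nat.le_add_left _ _)
  · intro n
    have h1 : ∑ i ∈ Finset.range n, W (i + k0)
        ≤ ∑ i ∈ Finset.range n, ((Eseq (i + k0) - Eseq (i + 1 + k0)) + v (i + k0)) := by
      apply Finset.sum_le_sum
      intro i _
      have := hWle (i + k0) (Nat.le_add_left _ _)
      have e : i + k0 + 1 = i + 1 + k0 := by omega
      rw [e] at this
      exact this
    have h2 : ∑ i ∈ Finset.range n, ((Eseq (i + k0) - Eseq (i + 1 + k0)) + v (i + k0))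
        = (Eseq k0 - Eseq (n + k0)) + ∑ i ∈ Finset.range n, v (i + k0) := by
      rw [Finset.sum_add_distrib]
      congr 1
      simpa using Finset.sum_range_sub' (fun i => Eseq (i + k0)) n
    have h3 : ∑ i ∈ Finset.range n, v (i + k0) ≤ ∑' i, v (i + k0) :=
      Summable.sum_le_tsum _ (fun i _ => hv _) hvs'
    have h4 : B ≤ Eseq (n + k0) := hlb _ (Nat.le_add_left _ _)
    calc ∑ i ∈ Finset.range n, W (i + k0) ≤ _ := h1
      _ = _ := h2
      _ ≤ Eseq k0 - B + ∑' i, v (i + k0) := by linarith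

private lemma aux_conv {En u : ℕ → ℝ} {k0 : ℕ} {B : ℝ}
    (hu : ∀ k, 0 ≤ u k) (hus : Summable u)
    (hstep : ∀ k, k0 ≤ k → En (k+1) ≤ En k + u k)
    (hlb : ∀ k, k0 ≤ k → B ≤ En k) :
    (∃ l, Tendsto En atTop (𝓝 l)) ∧ ∀ k, k0 ≤ k → En k ≤ En k0 + ∑' i, u i := by
  set S : ℕ → ℝ := fun n => ∑ i ∈ Finset.range n, u i with hS
  have hSle : ∀ n, S n ≤ ∑' i, u i := fun n => Summable.sum_le_tsum _ (fun i _ => hu _) hus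
  have hS0 : ∀ n, 0 ≤ S n := fun n => Finset.sum_nonneg (fun i _ => hu i)
  set b : ℕ → ℝ := fun n => En n - S n with hb
  have hbstep : ∀ k, k0 ≤ k → b (k+1) ≤ b k := by
    intro k hk
    have h1 := hstep k hk
    have h2 : S (k+1) = S k + u k := Finset.sum_range_succ _ _
    simp only [hb]
    rw [h2]; linarith
  have hanti : Antitone (fun n => b (n + k0)) := by
    apply antitone_nat_of_succ_le
    intro n
    have e : n + 1 + k0 = (n + k0) + 1 := by omega
    rw [e]
    exact hbstep (n + k0) (Nat.le_add_left _ _)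
  have hbdd : BddBelow (Set.range (fun n => b (n + k0))) := by
    refine ⟨B - ∑' i, u i, ?_⟩
    rintro x ⟨n, rfl⟩
    have := hlb (n + k0) (Nat.le_add_left _ _)
    have := hSle (n + k0)
    simp only [hb]
    linarith
  have hbtend : Tendsto b atTop (𝓝 (⨅ n, b (n + k0))) :=
    (tendsto_add_atTop_iff_nat k0).1 (tendsto_atTop_ciInf hanti hbdd)
  have hStend : Tendsto S atTop (𝓝 (∑' i, u i)) := hus.hasSum.tendsto_sum_nat
  constructor
  · refine ⟨(⨅ n, b (n + k0)) + ∑' i, u i, ?_⟩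
    have : (fun n => b n + S n) = En := by funext n; simp [hb]
    rw [← this]
    exact hbtend.add hStend
  · intro k hk
    have hmono : b k ≤ b k0 := by
      have h := hanti (a := 0) (b := k - k0) (Nat.zero_le _)
      have e1 : 0 + k0 = k0 := by omega
      have e2 : k - k0 + k0 = k := by omega
      simp only [e1, e2] at h
      exact h
    have := hSle k
    have := hS0 k0
    simp only [hb] at hmono
    linarith

set_option maxHeartbeats 1000000 in
/-- general discrete descent lemma, case `1/ρ* < δ̂ < 1`
under conditions (C1) and (C2). -/
theorem descent_lemma_case_holder
    (η δhat δ β c θ γ : ℝ) (hη : η = 1 ∨ η = 2) (hδhat : 0 < δhat) (hδ : δ = η * δhat)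
    (hβ : 0 < β) (hc : 0 < c)
    (ε : ℕ → ℝ) (hε : ∀ k : ℕ, ε k = c / ((k : ℝ) + β) ^ δ)
    (hθ : 0 < θ) (hγ : 0 ≤ γ)
    (t : ℕ → ℝ) (ht : ∀ k : ℕ, t k = θ * ((k : ℝ) + γ))
    (F H V g ζ En : ℕ → ℝ) (Hstar : ℝ) (hHstar : 0 ≤ Hstar) (k0 : ℕ) (hk0 : 1 ≤ k0)
    (hEn : ∀ k : ℕ, 1 ≤ k → En k = t k ^ η * (F k + ε (k - 1) * H k) + V k)
    (hFnn : ∀ k : ℕ, k0 ≤ k → 0 ≤ F k)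
    (hHlb : ∀ k : ℕ, k0 ≤ k → -Hstar ≤ H k)
    (hVnn : ∀ k : ℕ, k0 ≤ k → 0 ≤ V k)
    (hgnn : ∀ k : ℕ, 0 ≤ g k)
    (C2 C1ζ C2ζ : ℝ) (hC2 : 0 ≤ C2) (hC1ζ : 0 < C1ζ) (hC2ζ : 0 < C2ζ)
    (hζ : ∀ k : ℕ, k0 ≤ k →
      C1ζ * (k : ℝ) ^ (η - 1) * ε (k - 1) ≤ ζ k ∧ ζ k ≤ C2ζ * (k : ℝ) ^ (η - 1) * ε k)
    (hmain : ∀ k : ℕ, k0 ≤ k →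
      En (k + 1) - En k + ζ k * H k + g k ≤ -(C2 * (k : ℝ) ^ (η - 1) * F k))
    (ρ ρs : ℝ) (hρ1 : 1 < ρ) (hρ2 : ρ ≤ 2) (hρs : 1 / ρ + 1 / ρs = 1)
    (hδhatlb : 1 / ρs < δhat) (hδhatub : δhat < 1) (hC2pos : 0 < C2)
    (C3 : ℝ) (hC3 : 0 ≤ C3)
    (hcond1 : ∀ k : ℕ, k0 ≤ k → -H k ≤ C3 * F k ^ (1 / ρ))
    (hcond2 : ∀ r : ℝ, 0 < r → ∃ I : ℕ → ℝ, (∀ k : ℕ, 0 ≤ I k) ∧ Summable I ∧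
      ∀ k : ℕ, k0 ≤ k → -((k : ℝ) ^ (η - 1) * (F k + r * ε k * H k)) ≤ I k)
    :
    ((fun k : ℕ => F k) =O[atTop] fun k : ℕ => (k : ℝ) ^ (-η)) ∧
    (∃ CH : ℝ, 0 ≤ CH ∧ ∀ k : ℕ, k0 ≤ k →
      -(CH * (k : ℝ) ^ (-δ + η / ρs)) ≤ t k ^ η * ε (k - 1) * H k) ∧
    (∃ l : ℝ, Tendsto En atTop (𝓝 l)) ∧
    Summable (fun k : ℕ => (k : ℝ) ^ (η - 1) * F k) ∧
    Summable (fun k : ℕ => (k : ℝ) ^ (η - 1) * ε (k - 1) * |H k|) ∧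
    Summable g := by
  -- basic numeric facts
  have hη1 : (1:ℝ) ≤ η := by rcases hη with h | h <;> rw [h] <;> norm_num
  have hηpos : (0:ℝ) < η := by linarith
  have hδpos : 0 < δ := by rw [hδ]; exact mul_pos hηpos hδhat
  have hρpos : 0 < ρ := lt_trans one_pos hρ1
  have hiρ : 0 < 1/ρ := by positivity
  have hiρ1 : 1/ρ < 1 := by rw [div_lt_one hρpos]; exact hρ1
  have hiρs : 0 < 1/ρs := by linarith
  have hρspos : 0 < ρs := one_div_pos.mp hiρs
  have hconj : ρ.HolderConjugate ρs := Real.holderConjugate_iff.mpr ⟨hρ1, by simpa [one_div] using hρs⟩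
  have hδρs : η < δ * ρs := by
    have h1 : 1 < δhat * ρs := by rw [div_lt_iff₀ hρspos] at hδhatlb; linarith
    rw [hδ]
    have h2 := mul_pos hηpos (sub_pos.2 h1)
    nlinarith [h2]
  have hqlt : η - 1 - δ * ρs < -1 := by linarith
  have hknat : ∀ k : ℕ, 1 ≤ k → (0:ℝ) < (k:ℝ) := fun k hk => by exact_mod_cast hk
  -- ε facts
  have hbase : ∀ n : ℕ, (0:ℝ) < (n:ℝ) + β :=
    fun n => add_pos_of_nonneg_of_pos (Nat.cast_nonneg n) hβ
  have hεpos : ∀ n : ℕ, 0 < ε n := by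
    intro n; rw [hε]; exact div_pos hc (Real.rpow_pos_of_pos (hbase n) _)
  have hεnn : ∀ n : ℕ, 0 ≤ ε n := fun n => (hεpos n).le
  have hcast : ∀ k : ℕ, 1 ≤ k → ((k-1 : ℕ):ℝ) = (k:ℝ) - 1 := by
    intro k hk; exact Nat.cast_pred (by omega)
  set m : ℝ := min β (1/2) with hm
  have hmpos : 0 < m := lt_min hβ (by norm_num)
  have hmk : ∀ k : ℕ, 1 ≤ k → m * (k:ℝ) ≤ (k:ℝ) - 1 + β := by
    intro k hk
    have hk1 : (1:ℝ) ≤ (k:ℝ) := by exact_mod_cast hk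
    rcases Nat.lt_or_ge k 2 with h | h
    · have hk1' : k = 1 := by omega
      subst hk1'
      have := min_le_left β (1/2)
      norm_num
      linarith
    · have hk2 : (2:ℝ) ≤ (k:ℝ) := by exact_mod_cast h
      have h1 : m ≤ 1/2 := min_le_right _ _
      have h2 : m * (k:ℝ) ≤ (1/2) * (k:ℝ) :=
        mul_le_mul_of_nonneg_right h1 (by positivity)
      linarith
  have hε1 : ∀ k : ℕ, 1 ≤ k → ε (k-1) ≤ (c / m ^ δ) * (k:ℝ) ^ (-δ) := by
    intro k hk
    have hkpos := hknat k hk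
    have hkd : (0:ℝ) < (k:ℝ)^δ := Real.rpow_pos_of_pos hkpos _
    have hmd : (0:ℝ) < m ^ δ := Real.rpow_pos_of_pos hmpos _
    have h1 : (m * (k:ℝ)) ^ δ ≤ ((k:ℝ) - 1 + β) ^ δ :=
      Real.rpow_le_rpow (by positivity) (hmk k hk) hδpos.le
    have h2 : (m * (k:ℝ)) ^ δ = m ^ δ * (k:ℝ) ^ δ := Real.mul_rpow hmpos.le hkpos.le
    rw [hε, hcast k hk]
    have hkd' := hkd.ne'
    have hmd' := hmd.ne'
    calc c / ((k:ℝ) - 1 + β) ^ δ ≤ c / (m ^ δ * (k:ℝ) ^ δ) := by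
          apply div_le_div_of_nonneg_left hc.le (by positivity)
          rw [← h2]; exact h1
      _ = (c / m ^ δ) * (k:ℝ) ^ (-δ) := by
          rw [Real.rpow_neg hkpos.le]; field_simp
  have hε2 : ∀ k : ℕ, 1 ≤ k → ε k ≤ c * (k:ℝ) ^ (-δ) := by
    intro k hk
    have hkpos := hknat k hk
    have hkd : (0:ℝ) < (k:ℝ)^δ := Real.rpow_pos_of_pos hkpos _
    have h1 : (k:ℝ) ^ δ ≤ ((k:ℝ) + β) ^ δ :=
      Real.rpow_le_rpow hkpos.le (by linarith) hδpos.le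
    rw [hε]
    calc c / ((k:ℝ) + β) ^ δ ≤ c / (k:ℝ) ^ δ :=
          div_le_div_of_nonneg_left hc.le hkd h1
      _ = c * (k:ℝ) ^ (-δ) := by rw [Real.rpow_neg hkpos.le]; ring
  -- t facts
  have htnn : ∀ k : ℕ, 0 ≤ t k := fun k => by
    rw [ht]; exact mul_nonneg hθ.le (add_nonneg (Nat.cast_nonneg k) hγ)
  have htpos : ∀ k : ℕ, 1 ≤ k → 0 < t k := by
    intro k hk
    have hk1 : (1:ℝ) ≤ (k:ℝ) := by exact_mod_cast hk
    rw [ht]; exact mul_pos hθ (by linarith)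
  have htηpos : ∀ k : ℕ, 1 ≤ k → 0 < t k ^ η := fun k hk => Real.rpow_pos_of_pos (htpos k hk) _
  have hγ1 : (0:ℝ) ≤ 1 + γ := by linarith
  have hA1nn : 0 ≤ θ^η * (1+γ)^η :=
    mul_nonneg (Real.rpow_nonneg hθ.le _) (Real.rpow_nonneg hγ1 _)
  have htub : ∀ k : ℕ, 1 ≤ k → t k ^ η ≤ (θ^η * (1+γ)^η) * (k:ℝ)^η := by
    intro k hk
    have hk1 : (1:ℝ) ≤ (k:ℝ) := by exact_mod_cast hk
    have h1 : t k ≤ θ * ((1+γ) * (k:ℝ)) := by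
      rw [ht]
      have h2 : (k:ℝ) + γ ≤ (1+γ) * (k:ℝ) := by
        have h3 := mul_nonneg hγ (by linarith : (0:ℝ) ≤ (k:ℝ) - 1)
        nlinarith [h3]
      exact mul_le_mul_of_nonneg_left h2 hθ.le
    calc t k ^ η ≤ (θ * ((1+γ)*(k:ℝ))) ^ η := Real.rpow_le_rpow (htnn k) h1 hηpos.le
      _ = (θ^η * (1+γ)^η) * (k:ℝ)^η := by
          rw [Real.mul_rpow hθ.le (by positivity),
            Real.mul_rpow hγ1 (Nat.cast_nonneg k)]; ring
  have htlb : ∀ k : ℕ, 1 ≤ k → θ^η * (k:ℝ)^η ≤ t k ^ η := by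
    intro k hk
    have hk1 : (1:ℝ) ≤ (k:ℝ) := by exact_mod_cast hk
    have h1 : θ * (k:ℝ) ≤ t k := by
      rw [ht]; exact mul_le_mul_of_nonneg_left (by linarith) hθ.le
    calc θ^η * (k:ℝ)^η = (θ * (k:ℝ))^η :=
          (Real.mul_rpow hθ.le (Nat.cast_nonneg k)).symm
      _ ≤ t k ^ η := Real.rpow_le_rpow (mul_nonneg hθ.le (Nat.cast_nonneg k)) h1 hηpos.le
  -- Young instantiations
  obtain ⟨D, hD0, hYD⟩ := young_split hconj (half_pos hC2pos)
  obtain ⟨D2, hD20, hYD2⟩ := young_split hconj (lam := 1/2) (by norm_num)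
  -- the summable error sequence u
  set u : ℕ → ℝ := fun k => D * ((k:ℝ)^(η-1) * (C2ζ * C3 * ε k) ^ ρs) with hu_def
  have hCCnn : 0 ≤ C2ζ * C3 := mul_nonneg hC2ζ.le hC3
  have hu0 : ∀ k, 0 ≤ u k := by
    intro k
    exact mul_nonneg hD0 (mul_nonneg (Real.rpow_nonneg (Nat.cast_nonneg k) _)
      (Real.rpow_nonneg (mul_nonneg hCCnn (hεnn k)) _))
  have hus : Summable u := by
    apply summable_of_rpow_bound (K := D * (C2ζ*C3*c)^ρs) (p := η - 1 - δ*ρs) hqlt hu0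
    intro k hk
    have hkpos := hknat k hk
    have h1 : C2ζ * C3 * ε k ≤ C2ζ * C3 * (c * (k:ℝ)^(-δ)) :=
      mul_le_mul_of_nonneg_left (hε2 k hk) hCCnn
    have h2 : (C2ζ*C3*ε k)^ρs ≤ (C2ζ*C3*c)^ρs * (k:ℝ)^(-δ*ρs) := by
      calc (C2ζ*C3*ε k)^ρs ≤ (C2ζ*C3*(c*(k:ℝ)^(-δ)))^ρs :=
            Real.rpow_le_rpow (mul_nonneg hCCnn (hεnn k)) h1 hρspos.le
        _ = (C2ζ*C3*c)^ρs * (k:ℝ)^(-δ*ρs) := by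
            rw [show C2ζ*C3*(c*(k:ℝ)^(-δ)) = (C2ζ*C3*c) * (k:ℝ)^(-δ) by ring,
              Real.mul_rpow (mul_nonneg hCCnn hc.le) (Real.rpow_nonneg hkpos.le _),
              ← Real.rpow_mul hkpos.le]
    calc u k = D * ((k:ℝ)^(η-1) * (C2ζ*C3*ε k)^ρs) := rfl
      _ ≤ D * ((k:ℝ)^(η-1) * ((C2ζ*C3*c)^ρs * (k:ℝ)^(-δ*ρs))) := by
          apply mul_le_mul_of_nonneg_left _ hD0
          exact mul_le_mul_of_nonneg_left h2 (Real.rpow_nonneg hkpos.le _)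
      _ = D * (C2ζ*C3*c)^ρs * ((k:ℝ)^(η-1) * (k:ℝ)^(-δ*ρs)) := by ring
      _ = D * (C2ζ*C3*c)^ρs * (k:ℝ)^(η-1-δ*ρs) := by
          rw [← Real.rpow_add hkpos]; congr 1; ring
  -- absorbing inequality
  have habsorb : ∀ k, k0 ≤ k →
      ζ k * (C3 * F k ^ (1/ρ)) ≤ C2/2 * ((k:ℝ)^(η-1) * F k) + u k := by
    intro k hk
    have hk1 : 1 ≤ k := le_trans hk0 hk
    have hkpos := hknat k hk1
    have hpk : 0 < (k:ℝ)^(η-1) := Real.rpow_pos_of_pos hkpos _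
    have hF := hFnn k hk
    have hFρ : 0 ≤ F k ^ (1/ρ) := Real.rpow_nonneg hF _
    have h1 : ζ k * (C3 * F k ^ (1/ρ)) ≤ (C2ζ * (k:ℝ)^(η-1) * ε k) * (C3 * F k^(1/ρ)) :=
      mul_le_mul_of_nonneg_right (hζ k hk).2 (mul_nonneg hC3 hFρ)
    have h3 := hYD ((k:ℝ)^(η-1)) (F k) (C2ζ*C3*ε k) hpk hF (mul_nonneg hCCnn (hεnn k))
    calc ζ k * (C3 * F k ^ (1/ρ)) ≤ (C2ζ * (k:ℝ)^(η-1) * ε k) * (C3 * F k^(1/ρ)) := h1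
      _ = (k:ℝ)^(η-1) * (C2ζ*C3*ε k) * F k^(1/ρ) := by ring
      _ ≤ C2/2 * ((k:ℝ)^(η-1) * F k) + D * ((k:ℝ)^(η-1) * (C2ζ*C3*ε k)^ρs) := h3
      _ = C2/2 * ((k:ℝ)^(η-1) * F k) + u k := rfl
  have hζnn : ∀ k, k0 ≤ k → 0 ≤ ζ k := by
    intro k hk
    have hk1 : 1 ≤ k := le_trans hk0 hk
    have hpk : 0 ≤ (k:ℝ)^(η-1) := Real.rpow_nonneg (hknat k hk1).le _
    exact le_trans (mul_nonneg (mul_nonneg hC1ζ.le hpk) (hεnn _)) (hζ k hk).1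
  -- step inequalities
  have hstepW : ∀ k, k0 ≤ k → En (k+1) ≤ En k + u k ∧
      C2/2*((k:ℝ)^(η-1)*F k) + g k ≤ En k - En (k+1) + u k := by
    intro k hk
    have hmain' := hmain k hk
    have habs := habsorb k hk
    have hζH : -(ζ k * H k) ≤ ζ k * (C3 * F k^(1/ρ)) := by
      have h1 : -H k ≤ C3 * F k^(1/ρ) := hcond1 k hk
      calc -(ζ k * H k) = ζ k * (-H k) := by ring
        _ ≤ ζ k * (C3 * F k^(1/ρ)) := mul_le_mul_of_nonneg_left h1 (hζnn k hk)
    have hk1 : 1 ≤ k := le_trans hk0 hk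
    have hpkF : 0 ≤ (k:ℝ)^(η-1)*F k :=
      mul_nonneg (Real.rpow_nonneg (hknat k hk1).le _) (hFnn k hk)
    have hCX : 0 ≤ C2 * ((k:ℝ)^(η-1)*F k) := mul_nonneg hC2pos.le hpkF
    have hg := hgnn k
    constructor <;> linarith [hmain', habs, hζH, hCX, hg]
  -- uniform bound on t^η ε(k-1)^{ρs} term
  have hA2nn : 0 ≤ (C3 * (c / m^δ))^ρs :=
    Real.rpow_nonneg (mul_nonneg hC3 (by positivity)) _
  have hMle : ∀ k : ℕ, 1 ≤ k →
      t k ^ η * (C3 * ε (k-1)) ^ ρs ≤ (θ^η * (1+γ)^η) * (C3 * (c / m^δ))^ρs := by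
    intro k hk
    have hkpos := hknat k hk
    have h1 := htub k hk
    have h2 : C3 * ε (k-1) ≤ C3 * ((c/m^δ) * (k:ℝ)^(-δ)) :=
      mul_le_mul_of_nonneg_left (hε1 k hk) hC3
    have h3 : (C3*ε (k-1))^ρs ≤ (C3*(c/m^δ))^ρs * (k:ℝ)^(-δ*ρs) := by
      calc (C3*ε (k-1))^ρs ≤ (C3*((c/m^δ)*(k:ℝ)^(-δ)))^ρs :=
            Real.rpow_le_rpow (mul_nonneg hC3 (hεnn _)) h2 hρspos.le
        _ = (C3*(c/m^δ))^ρs * (k:ℝ)^(-δ*ρs) := by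
            rw [show C3*((c/m^δ)*(k:ℝ)^(-δ)) = (C3*(c/m^δ))*(k:ℝ)^(-δ) by ring,
              Real.mul_rpow (mul_nonneg hC3 (by positivity)) (Real.rpow_nonneg hkpos.le _),
              ← Real.rpow_mul hkpos.le]
    calc t k^η * (C3*ε (k-1))^ρs
        ≤ ((θ^η * (1+γ)^η)*(k:ℝ)^η) * ((C3*(c/m^δ))^ρs * (k:ℝ)^(-δ*ρs)) :=
          mul_le_mul h1 h3 (Real.rpow_nonneg (mul_nonneg hC3 (hεnn _)) _)
            (mul_nonneg hA1nn (Real.rpow_nonneg hkpos.le _))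
      _ = (θ^η * (1+γ)^η) * (C3*(c/m^δ))^ρs * ((k:ℝ)^η * (k:ℝ)^(-δ*ρs)) := by ring
      _ = (θ^η * (1+γ)^η) * (C3*(c/m^δ))^ρs * (k:ℝ)^(η + -δ*ρs) := by
          rw [Real.rpow_add hkpos]
      _ ≤ (θ^η * (1+γ)^η) * (C3*(c/m^δ))^ρs * 1 := by
          apply mul_le_mul_of_nonneg_left _ (mul_nonneg hA1nn hA2nn)
          exact Real.rpow_le_one_of_one_le_of_nonpos (by exact_mod_cast hk) (by linarith)
      _ = (θ^η * (1+γ)^η) * (C3*(c/m^δ))^ρs := mul_one _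
  set M : ℝ := (θ^η * (1+γ)^η) * (C3 * (c / m^δ))^ρs with hMdef
  have hM0 : 0 ≤ M := mul_nonneg hA1nn hA2nn
  -- E lower bound
  have hEkey : ∀ k, k0 ≤ k →
      1/2 * (t k^η * F k) - D2 * (t k^η * (C3*ε (k-1))^ρs) ≤ En k := by
    intro k hk
    have hk1 : 1 ≤ k := le_trans hk0 hk
    have htη := htηpos k hk1
    have hF := hFnn k hk
    have hεnn' := hεnn (k-1)
    have h1 : -(t k^η * ε (k-1) * H k) ≤ t k^η * (C3*ε (k-1)) * F k^(1/ρ) := by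
      have h2 : -H k ≤ C3*F k^(1/ρ) := hcond1 k hk
      have h3 : 0 ≤ t k^η * ε (k-1) := mul_nonneg htη.le hεnn'
      calc -(t k^η*ε (k-1)*H k) = (t k^η*ε (k-1)) * (-H k) := by ring
        _ ≤ (t k^η*ε (k-1)) * (C3*F k^(1/ρ)) := mul_le_mul_of_nonneg_left h2 h3
        _ = t k^η * (C3*ε (k-1)) * F k^(1/ρ) := by ring
    have h4 := hYD2 (t k^η) (F k) (C3*ε (k-1)) htη hF (mul_nonneg hC3 hεnn')
    have hEnk := hEn k hk1
    have hV := hVnn k hk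
    have e : En k = t k^η * F k + t k^η * ε (k-1) * H k + V k := by rw [hEnk]; ring
    have h5 : 0 ≤ t k^η * F k := mul_nonneg htη.le hF
    linarith
  have hElb : ∀ k, k0 ≤ k → -(D2*M) ≤ En k := by
    intro k hk
    have hk1 : 1 ≤ k := le_trans hk0 hk
    have h1 := hEkey k hk
    have h5 : 0 ≤ t k^η*F k := mul_nonneg (htηpos k hk1).le (hFnn k hk)
    have h6 : D2 * (t k^η*(C3*ε (k-1))^ρs) ≤ D2*M :=
      mul_le_mul_of_nonneg_left (hMle k hk1) hD20
    linarith
  obtain ⟨hlim, hEub⟩ := aux_conv hu0 hus (fun k hk => (hstepW k hk).1) hElb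
  -- bound on t^η F
  set Q : ℝ := En k0 + (∑' i, u i) + D2*M with hQdef
  have hFb : ∀ k, k0 ≤ k → t k^η * F k ≤ 2*Q := by
    intro k hk
    have hk1 : 1 ≤ k := le_trans hk0 hk
    have h1 := hEkey k hk
    have h2 := hEub k hk
    have h6 : D2 * (t k^η*(C3*ε (k-1))^ρs) ≤ D2*M :=
      mul_le_mul_of_nonneg_left (hMle k hk1) hD20
    linarith
  have hQ0 : 0 ≤ Q := by
    have h1 := hFb k0 (le_refl k0)
    have h5 : 0 ≤ t k0^η*F k0 := mul_nonneg (htηpos k0 hk0).le (hFnn k0 le_rfl)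
    linarith
  have hθη : 0 < θ^η := Real.rpow_pos_of_pos hθ _
  set CF : ℝ := 2*Q / θ^η with hCF
  have hCF0 : 0 ≤ CF := div_nonneg (by linarith) hθη.le
  have hFbound : ∀ k, k0 ≤ k → F k ≤ CF * (k:ℝ)^(-η) := by
    intro k hk
    have hk1 : 1 ≤ k := le_trans hk0 hk
    have hkpos := hknat k hk1
    have hkη : 0 < (k:ℝ)^η := Real.rpow_pos_of_pos hkpos _
    have h1 : θ^η * (k:ℝ)^η * F k ≤ t k^η * F k :=
      mul_le_mul_of_nonneg_right (htlb k hk1) (hFnn k hk)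
    have h2 : θ^η*(k:ℝ)^η * F k ≤ 2*Q := le_trans h1 (hFb k hk)
    have h3 : F k ≤ 2*Q / (θ^η * (k:ℝ)^η) := by
      rw [le_div_iff₀ (mul_pos hθη hkη)]
      calc F k * (θ^η*(k:ℝ)^η) = θ^η*(k:ℝ)^η*F k := by ring
        _ ≤ 2*Q := h2
    calc F k ≤ 2*Q/(θ^η*(k:ℝ)^η) := h3
      _ = CF * (k:ℝ)^(-η) := by
          rw [Real.rpow_neg hkpos.le, hCF, ← div_div, div_eq_mul_inv]
  -- goal (i)
  have goal1 : (fun k:ℕ => F k) =O[atTop] fun k:ℕ => (k:ℝ)^(-η) := by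
    rw [Asymptotics.isBigO_iff]
    refine ⟨CF, ?_⟩
    filter_upwards [eventually_ge_atTop k0] with k hk
    have hk1 : 1 ≤ k := le_trans hk0 hk
    have h1 : 0 < (k:ℝ)^(-η) := Real.rpow_pos_of_pos (hknat k hk1) _
    rw [Real.norm_eq_abs, Real.norm_eq_abs, abs_of_nonneg (hFnn k hk), abs_of_nonneg h1.le]
    exact hFbound k hk
  -- goal (ii)
  have hsum : η*(1/ρ) + η/ρs = η := by
    have h2 : η/ρs = η*(1/ρs) := (mul_one_div η ρs).symm
    rw [h2, ← mul_add, hρs, mul_one]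
  have goal2 : ∃ CH : ℝ, 0 ≤ CH ∧ ∀ k : ℕ, k0 ≤ k →
      -(CH * (k:ℝ) ^ (-δ + η / ρs)) ≤ t k ^ η * ε (k-1) * H k := by
    refine ⟨(θ^η*(1+γ)^η) * (c/m^δ) * (C3 * CF^(1/ρ)), ?_, ?_⟩
    · exact mul_nonneg (mul_nonneg hA1nn (by positivity))
        (mul_nonneg hC3 (Real.rpow_nonneg hCF0 _))
    intro k hk
    have hk1 : 1 ≤ k := le_trans hk0 hk
    have hkpos := hknat k hk1
    have hF := hFnn k hk
    have hFρ : 0 ≤ F k ^ (1/ρ) := Real.rpow_nonneg hF _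
    have f1 : t k^η * ε (k-1) ≤ ((θ^η*(1+γ)^η)*(k:ℝ)^η) * ((c/m^δ)*(k:ℝ)^(-δ)) :=
      mul_le_mul (htub k hk1) (hε1 k hk1) (hεnn _)
        (mul_nonneg hA1nn (Real.rpow_nonneg hkpos.le _))
    have f2 : C3*F k^(1/ρ) ≤ C3*(CF^(1/ρ)*(k:ℝ)^(-η*(1/ρ))) := by
      apply mul_le_mul_of_nonneg_left _ hC3
      calc F k^(1/ρ) ≤ (CF*(k:ℝ)^(-η))^(1/ρ) :=
            Real.rpow_le_rpow hF (hFbound k hk) hiρ.le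
        _ = CF^(1/ρ)*(k:ℝ)^(-η*(1/ρ)) := by
            rw [Real.mul_rpow hCF0 (Real.rpow_nonneg hkpos.le _), ← Real.rpow_mul hkpos.le]
    have hprod : t k^η * ε (k-1) * (C3*F k^(1/ρ)) ≤
        (((θ^η*(1+γ)^η)*(k:ℝ)^η) * ((c/m^δ)*(k:ℝ)^(-δ))) *
          (C3*(CF^(1/ρ)*(k:ℝ)^(-η*(1/ρ)))) :=
      mul_le_mul f1 f2 (mul_nonneg hC3 hFρ)
        (mul_nonneg (mul_nonneg hA1nn (Real.rpow_nonneg hkpos.le _))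
          (mul_nonneg (by positivity) (Real.rpow_nonneg hkpos.le _)))
    have heq : (((θ^η*(1+γ)^η)*(k:ℝ)^η) * ((c/m^δ)*(k:ℝ)^(-δ))) *
          (C3*(CF^(1/ρ)*(k:ℝ)^(-η*(1/ρ)))) =
        ((θ^η*(1+γ)^η) * (c/m^δ) * (C3 * CF^(1/ρ))) * (k:ℝ)^(-δ + η/ρs) := by
      have e1 : (k:ℝ)^η * (k:ℝ)^(-δ) * (k:ℝ)^(-η*(1/ρ)) = (k:ℝ)^(-δ + η/ρs) := by
        rw [← Real.rpow_add hkpos, ← Real.rpow_add hkpos]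
        congr 1
        linarith [hsum]
      calc (((θ^η*(1+γ)^η)*(k:ℝ)^η) * ((c/m^δ)*(k:ℝ)^(-δ))) *
            (C3*(CF^(1/ρ)*(k:ℝ)^(-η*(1/ρ))))
          = ((θ^η*(1+γ)^η) * (c/m^δ) * (C3 * CF^(1/ρ))) *
            ((k:ℝ)^η * (k:ℝ)^(-δ) * (k:ℝ)^(-η*(1/ρ))) := by ring
        _ = _ := by rw [e1]
    have hneg : -(t k^η * ε (k-1) * H k) ≤
        ((θ^η*(1+γ)^η) * (c/m^δ) * (C3 * CF^(1/ρ))) * (k:ℝ)^(-δ + η/ρs) := by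
      have h2 : -H k ≤ C3*F k^(1/ρ) := hcond1 k hk
      have h3 : 0 ≤ t k^η * ε (k-1) := mul_nonneg (htηpos k hk1).le (hεnn _)
      calc -(t k^η*ε (k-1)*H k) = (t k^η*ε (k-1)) * (-H k) := by ring
        _ ≤ (t k^η*ε (k-1)) * (C3*F k^(1/ρ)) := mul_le_mul_of_nonneg_left h2 h3
        _ = t k^η * ε (k-1) * (C3*F k^(1/ρ)) := by ring
        _ ≤ _ := le_of_le_of_eq hprod heq
    linarith
  -- goal (iv) part 1: summability of k^{η-1} F k and g
  have hSW1 : Summable (fun k : ℕ => C2/2*((k:ℝ)^(η-1)*F k) + g k) := by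
    apply aux_summable_of_telescope (Eseq := En) (v := u) (B := -(D2*M))
    · intro k hk
      have hk1 : 1 ≤ k := le_trans hk0 hk
      exact add_nonneg (mul_nonneg (by linarith)
        (mul_nonneg (Real.rpow_nonneg (hknat k hk1).le _) (hFnn k hk))) (hgnn k)
    · exact fun k hk => (hstepW k hk).2
    · exact hu0
    · exact hus
    · exact hElb
  have hSPF : Summable (fun k : ℕ => (k:ℝ)^(η-1) * F k) := by
    apply summable_of_le_of_le (k1 := k0)
      (h := fun k => (2/C2)*(C2/2*((k:ℝ)^(η-1)*F k) + g k))
    · intro k hk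
      have hk1 : 1 ≤ k := le_trans hk0 hk
      exact mul_nonneg (Real.rpow_nonneg (hknat k hk1).le _) (hFnn k hk)
    · intro k hk
      have hg := hgnn k
      have he : (2/C2)*(C2/2*((k:ℝ)^(η-1)*F k) + g k)
          = (k:ℝ)^(η-1)*F k + (2/C2)*g k := by
        field_simp
      rw [he]
      have h2 : 0 ≤ (2/C2)*g k := mul_nonneg (by positivity) hg
      linarith
    · exact hSW1.mul_left _
  have hSg : Summable g := by
    apply summable_of_le_of_le (k1 := k0) (fun k _ => hgnn k)
      (h := fun k => C2/2*((k:ℝ)^(η-1)*F k) + g k) _ hSW1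
    intro k hk
    have hk1 : 1 ≤ k := le_trans hk0 hk
    have h1 : 0 ≤ C2/2*((k:ℝ)^(η-1)*F k) := mul_nonneg (by linarith)
      (mul_nonneg (Real.rpow_nonneg (hknat k hk1).le _) (hFnn k hk))
    linarith
  -- goal (iv) part 2: summability of k^{η-1} ε_{k-1} |H k|
  have hSW2 : Summable (fun k : ℕ => (k:ℝ)^(η-1) * ε (k-1) * |H k|) := by
    apply aux_summable_of_telescope (Eseq := fun k => C1ζ⁻¹*En k)
      (v := fun k => C1ζ⁻¹*(C2*|(k:ℝ)^(η-1)*F k| + 2*u k)) (B := C1ζ⁻¹*(-(D2*M)))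
    · intro k hk
      have hk1 : 1 ≤ k := le_trans hk0 hk
      exact mul_nonneg (mul_nonneg (Real.rpow_nonneg (hknat k hk1).le _) (hεnn _))
        (abs_nonneg _)
    · intro k hk
      have hk1 : 1 ≤ k := le_trans hk0 hk
      have hkpos := hknat k hk1
      have hpknn : 0 ≤ (k:ℝ)^(η-1) := Real.rpow_nonneg hkpos.le _
      have hζlb := (hζ k hk).1
      have habsk : |H k| ≤ H k + 2*(C3*F k^(1/ρ)) := by
        have h1 := hcond1 k hk
        have h2 : 0 ≤ C3*F k^(1/ρ) := mul_nonneg hC3 (Real.rpow_nonneg (hFnn k hk) _)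
        exact abs_le.2 ⟨by linarith, by linarith⟩
      have h3 : C1ζ * ((k:ℝ)^(η-1) * ε (k-1) * |H k|) ≤ ζ k * |H k| := by
        have he : C1ζ * ((k:ℝ)^(η-1) * ε (k-1) * |H k|)
            = (C1ζ*(k:ℝ)^(η-1)*ε (k-1)) * |H k| := by ring
        rw [he]
        exact mul_le_mul_of_nonneg_right hζlb (abs_nonneg _)
      have h4 : ζ k*|H k| ≤ ζ k*H k + 2*(ζ k*(C3*F k^(1/ρ))) := by
        calc ζ k*|H k| ≤ ζ k*(H k + 2*(C3*F k^(1/ρ))) :=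
              mul_le_mul_of_nonneg_left habsk (hζnn k hk)
          _ = ζ k*H k + 2*(ζ k*(C3*F k^(1/ρ))) := by ring
      have h5 : ζ k*H k ≤ En k - En (k+1) := by
        have hm := hmain k hk
        have hX : 0 ≤ C2*(k:ℝ)^(η-1)*F k :=
          mul_nonneg (mul_nonneg hC2pos.le hpknn) (hFnn k hk)
        have hg := hgnn k
        linarith
      have h6 := habsorb k hk
      have h7 : C2/2*((k:ℝ)^(η-1)*F k) ≤ C2/2*|(k:ℝ)^(η-1)*F k| :=
        mul_le_mul_of_nonneg_left (le_abs_self _) (by linarith)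
      have h8 : C1ζ * ((k:ℝ)^(η-1) * ε (k-1) * |H k|) ≤
          En k - En (k+1) + (C2*|(k:ℝ)^(η-1)*F k| + 2*u k) := by
        linarith
      have h9 : (k:ℝ)^(η-1) * ε (k-1) * |H k|
          = C1ζ⁻¹ * (C1ζ * ((k:ℝ)^(η-1) * ε (k-1) * |H k|)) := by
        field_simp
      rw [h9]
      calc C1ζ⁻¹ * (C1ζ * ((k:ℝ)^(η-1) * ε (k-1) * |H k|))
          ≤ C1ζ⁻¹*(En k - En (k+1) + (C2*|(k:ℝ)^(η-1)*F k| + 2*u k)) :=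
            mul_le_mul_of_nonneg_left h8 (inv_nonneg.2 hC1ζ.le)
        _ = C1ζ⁻¹*En k - C1ζ⁻¹*En (k+1) +
            C1ζ⁻¹*(C2*|(k:ℝ)^(η-1)*F k| + 2*u k) := by ring
    · intro k
      exact mul_nonneg (inv_nonneg.2 hC1ζ.le)
        (add_nonneg (mul_nonneg hC2pos.le (abs_nonneg _)) (by linarith [hu0 k]))
    · exact ((hSPF.abs.mul_left C2).add (hus.mul_left 2)).mul_left _
    · intro k hk
      exact mul_le_mul_of_nonneg_left (hElb k hk) (inv_nonneg.2 hC1ζ.le)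
  exact ⟨goal1, goal2, hlim, hSPF, hSW2, hSg⟩
end
end

section
/- Let x : [t_0, +∞) → 𝓗 be a continuously differentiable solution of the first-order Tikhonov flow ẋ(t) + ∇f(x(t)) + ε(t)∇h(x(t)) = 0, let x* be a solution of the continuous bilevel problem, let λ > 1, and define E_λ(t) := t( f(x(t)) + ε(t)h(x(t)) − f(x*) − ε(t)h(x*) ) + (λ/2)‖x(t) − x*‖². Then for all t ≥ t_0: Ė_λ(t) + ζ(t)(h(x(t)) − h(x*)) ≤ −(λ−1)(f(x(t)) − f(x*)), where ζ(t) := (λ−1)ε(t) − t ε̇(t). -/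
open Filter Topology Metric MeasureTheory Asymptotics
open scoped Pointwise RealInnerProductSpace ENNReal NNReal

noncomputable section

variable {E : Type*} [NormedAddCommGroup E] [InnerProductSpace ℝ E] [CompleteSpace E]

lemma grad_convex_ineq {E : Type*} [NormedAddCommGroup E] [InnerProductSpace ℝ E] [CompleteSpace E]
    (g : E → ℝ) (hconv : ConvexOn ℝ Set.univ g) {a ga : E}
    (hg : HasGradientAt g ga a) (b : E) :
    g a + ⟪ga, b - a⟫ ≤ g b := by
  set v := b - a with hvdef
  have hp : HasDerivAt (fun s : ℝ => a + s • v) v 0 := by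
    simpa using ((hasDerivAt_id (0:ℝ)).smul_const v).const_add a
  have hF : HasFDerivAt g (InnerProductSpace.toDual ℝ E ga) (a + (0:ℝ) • v) := by
    simpa using hg.hasFDerivAt
  have hφ : HasDerivAt (fun s : ℝ => g (a + s • v)) ⟪ga, v⟫ 0 := by
    exact hF.comp_hasDerivAt 0 hp
  have hslope : ∀ s ∈ Set.Ioc (0:ℝ) 1,
      slope (fun s : ℝ => g (a + s • v)) 0 s ≤ g b - g a := by
    intro s hs
    have hcomb : a + s • v = (1 - s) • a + s • b := by
      rw [hvdef]; module
    have hcv := hconv.2 (Set.mem_univ a) (Set.mem_univ b)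
      (by linarith [hs.2] : (0:ℝ) ≤ 1 - s) hs.1.le (by ring)
    rw [← hcomb] at hcv
    have : slope (fun s : ℝ => g (a + s • v)) 0 s = (g (a + s • v) - g a) / s := by
      simp [slope_def_field]
    rw [this, div_le_iff₀ hs.1]
    simp only [smul_eq_mul] at hcv
    nlinarith [hcv]
  have htend : Tendsto (slope (fun s : ℝ => g (a + s • v)) 0) (𝓝[>] 0) (𝓝 ⟪ga, v⟫) :=
    (hasDerivAt_iff_tendsto_slope.mp hφ).mono_left
      (nhdsWithin_mono _ (fun y hy => hy.ne'))
  have := le_of_tendsto htend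
    (Filter.eventually_of_mem (Ioc_mem_nhdsGT_of_mem ⟨le_refl (0:ℝ), one_pos⟩) hslope)
  linarith

/-- dissipation inequality for the Lyapunov energy of the first-order
Tikhonov flow. -/
theorem flow1_lyapunov_dissipation
    (f h : E → ℝ) (f' h' : E → E) (Lf Lh : ℝ≥0)
    (hf_conv : ConvexOn ℝ Set.univ f) (hh_conv : ConvexOn ℝ Set.univ h)
    (hf_grad : ∀ z, HasGradientAt f (f' z) z) (hh_grad : ∀ z, HasGradientAt h (h' z) z)
    (hf_lip : LipschitzWith Lf f') (hh_lip : LipschitzWith Lh h')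
    (hargmin : (argminSetR f).Nonempty) (hsol : (BilevelSolR f h).Nonempty)
    (t0 c δ : ℝ) (ht0 : 0 < t0) (hc : 0 < c) (hδ : 0 < δ)
    (ε : ℝ → ℝ) (hε : ∀ t : ℝ, ε t = c / t ^ δ)
    (x xd : ℝ → E)
    (hx : ∀ t ∈ Set.Ici t0, HasDerivWithinAt x (xd t) (Set.Ici t0) t)
    (hxdcont : ContinuousOn xd (Set.Ici t0))
    (hode : ∀ t ∈ Set.Ici t0, xd t + f' (x t) + ε t • h' (x t) = 0)
    (xs : E) (hxs : xs ∈ BilevelSolR f h) (lam : ℝ) (hlam : 1 < lam)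
    (En : ℝ → ℝ)
    (hEn : ∀ t : ℝ, En t =
      t * (f (x t) + ε t * h (x t) - f xs - ε t * h xs) + lam / 2 * ‖x t - xs‖ ^ 2)
    (ζ : ℝ → ℝ) (hζ : ∀ t : ℝ, ζ t = (lam - 1) * ε t - t * deriv ε t) :
    ∀ t ∈ Set.Ici t0,
      derivWithin En (Set.Ici t0) t + ζ t * (h (x t) - h xs) ≤
        -((lam - 1) * (f (x t) - f xs)) := by
  intro t ht
  have htpos : 0 < t := lt_of_lt_of_le ht0 ht
  have hεpos : 0 < ε t := by rw [hε]; positivity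
  -- differentiability of ε
  have hεfun : ε = fun s : ℝ => c / s ^ δ := funext hε
  have hεdiff : DifferentiableAt ℝ ε t := by
    rw [hεfun]
    exact (differentiableAt_const c).div
      (Real.differentiableAt_rpow_const_of_ne δ htpos.ne') (by positivity)
  have hεd : HasDerivAt ε (deriv ε t) t := hεdiff.hasDerivAt
  set ε' := deriv ε t with hε'
  set v := xd t with hv
  have hx' : HasDerivWithinAt x v (Set.Ici t0) t := hx t ht
  -- derivative of f ∘ x and h ∘ x
  have hfc : HasDerivWithinAt (fun s => f (x s)) ⟪f' (x t), v⟫ (Set.Ici t0) t := by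
    exact (hf_grad (x t)).hasFDerivAt.comp_hasDerivWithinAt t hx'
  have hhc : HasDerivWithinAt (fun s => h (x s)) ⟪h' (x t), v⟫ (Set.Ici t0) t := by
    exact (hh_grad (x t)).hasFDerivAt.comp_hasDerivWithinAt t hx'
  -- derivative of the squared norm
  have hsub : HasDerivWithinAt (fun s => x s - xs) v (Set.Ici t0) t := hx'.sub_const xs
  have hnorm : HasDerivWithinAt (fun s => ‖x s - xs‖ ^ 2)
      (⟪x t - xs, v⟫ + ⟪v, x t - xs⟫) (Set.Ici t0) t := by
    have hin := hsub.inner ℝ hsub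
    simpa only [real_inner_self_eq_norm_sq] using hin
  -- derivative of the inner bracket
  have hεh : HasDerivWithinAt (fun s => ε s * h (x s))
      (ε' * h (x t) + ε t * ⟪h' (x t), v⟫) (Set.Ici t0) t :=
    hεd.hasDerivWithinAt.mul hhc
  have hεhxs : HasDerivWithinAt (fun s => ε s * h xs) (ε' * h xs) (Set.Ici t0) t :=
    hεd.hasDerivWithinAt.mul_const (h xs)
  have hA : HasDerivWithinAt
      (fun s => f (x s) + ε s * h (x s) - f xs - ε s * h xs)
      (⟪f' (x t), v⟫ + (ε' * h (x t) + ε t * ⟪h' (x t), v⟫) - ε' * h xs)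
      (Set.Ici t0) t :=
    ((hfc.add hεh).sub_const (f xs)).sub hεhxs
  have hid : HasDerivWithinAt (fun s : ℝ => s) 1 (Set.Ici t0) t := hasDerivWithinAt_id t _
  have htotal : HasDerivWithinAt En
      (1 * (f (x t) + ε t * h (x t) - f xs - ε t * h xs)
        + t * (⟪f' (x t), v⟫ + (ε' * h (x t) + ε t * ⟪h' (x t), v⟫) - ε' * h xs)
        + lam / 2 * (⟪x t - xs, v⟫ + ⟪v, x t - xs⟫)) (Set.Ici t0) t := by
    rw [funext hEn]
    exact (hid.mul hA).add (hnorm.const_mul (lam / 2))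
  have hEn' := htotal.derivWithin (uniqueDiffOn_Ici t0 t ht)
  -- ODE facts
  have h0 := hode t ht
  rw [add_assoc] at h0
  have heq : f' (x t) + ε t • h' (x t) = -v := eq_neg_of_add_eq_zero_right h0
  have hInner : ⟪f' (x t), v⟫ + ε t * ⟪h' (x t), v⟫ = -‖v‖ ^ 2 := by
    have : ⟪f' (x t) + ε t • h' (x t), v⟫ = -‖v‖ ^ 2 := by
      rw [heq, inner_neg_left, real_inner_self_eq_norm_sq]
    rwa [inner_add_left, real_inner_smul_left] at this
  have hveq : v = -(f' (x t) + ε t • h' (x t)) := by rw [heq, neg_neg]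
  have hIp : ⟪v, x t - xs⟫ = -(⟪f' (x t), x t - xs⟫ + ε t * ⟪h' (x t), x t - xs⟫) := by
    rw [hveq, inner_neg_left, inner_add_left, real_inner_smul_left]
  -- convexity inequalities
  have hgf := grad_convex_ineq f hf_conv (hf_grad (x t)) xs
  have hgh := grad_convex_ineq h hh_conv (hh_grad (x t)) xs
  rw [show xs - x t = -(x t - xs) by abel, inner_neg_right] at hgf hgh
  have hfa : 0 ≤ lam * (⟪f' (x t), x t - xs⟫ - (f (x t) - f xs)) :=
    mul_nonneg (by linarith) (by linarith)
  have hha : 0 ≤ (lam * ε t) * (⟪h' (x t), x t - xs⟫ - (h (x t) - h xs)) :=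
    mul_nonneg (by nlinarith) (by linarith)
  have htv : 0 ≤ t * ‖v‖ ^ 2 := by positivity
  have h3 : t * ⟪f' (x t), v⟫ + t * (ε t * ⟪h' (x t), v⟫) = -(t * ‖v‖ ^ 2) := by
    linear_combination t * hInner
  rw [hEn', hζ t, real_inner_comm v (x t - xs), hIp]
  nlinarith [hfa, hha, htv, h3]
end
end

section
/- Let x : [t_0, +∞) → 𝓗 be a twice continuously differentiable solution of the second-order Tikhonov system ẍ(t) + (α/t)ẋ(t) + ∇f(x(t)) + ε(t)∇h(x(t)) = 0 with α > 3, let x* be a solution of the continuous bilevel problem, let λ ∈ (2, α−1), and define E_λ(t) := t²( f(x(t)) + ε(t)h(x(t)) − f(x*) − ε(t)h(x*) ) + (1/2)‖λ(x(t) − x*) + t ẋ(t)‖² + (λ(α−1−λ)/2)‖x(t) − x*‖². Then for all t ≥ t_0: Ė_λ(t) + ζ(t)(h(x(t)) − h(x*)) + (α−1−λ) t ‖ẋ(t)‖² ≤ −t(λ−2)(f(x(t)) − f(x*)), where ζ(t) := t(λ−2)ε(t) − t² ε̇(t). -/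
open Filter Topology Metric MeasureTheory Asymptotics
open scoped Pointwise RealInnerProductSpace ENNReal NNReal

noncomputable section

variable {E : Type*} [NormedAddCommGroup E] [InnerProductSpace ℝ E] [CompleteSpace E]

/-- Gradient inequality for convex differentiable functions. -/
lemma convex_grad_ineq {g : E → ℝ} (hg : ConvexOn ℝ Set.univ g) {G X : E}
    (hG : HasGradientAt g G X) (y : E) : g X + ⟪G, y - X⟫ ≤ g y := by
  set φ : ℝ → ℝ := fun s => g (X + s • (y - X)) with hφ
  have hL : HasDerivAt (fun s : ℝ => X + s • (y - X)) (y - X) 0 := by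
    simpa using ((hasDerivAt_id (0:ℝ)).smul_const (y - X)).const_add X
  have hφ' : HasDerivAt φ ⟪G, y - X⟫ 0 := by
    have hG' : HasFDerivAt g ((InnerProductSpace.toDual ℝ E) G) (X + (0:ℝ) • (y - X)) := by
      simpa using hG.hasFDerivAt
    have h2 := hG'.comp_hasDerivAt 0 hL
    simpa [φ, Function.comp_def, InnerProductSpace.toDual_apply_apply] using h2
  have key : ∀ s : ℝ, s ∈ Set.Ioc (0:ℝ) 1 → slope φ 0 s ≤ g y - g X := by
    intro s hs
    have h1 : φ s ≤ (1 - s) * g X + s * g y := by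
      have h2 := hg.2 (Set.mem_univ X) (Set.mem_univ y)
        (by linarith [hs.2] : (0:ℝ) ≤ 1 - s) hs.1.le (by ring)
      have h3 : X + s • (y - X) = (1 - s) • X + s • y := by module
      rw [hφ]; simp only [h3]; simpa [smul_eq_mul] using h2
    have h0 : φ 0 = g X := by simp [φ]
    rw [slope_def_field, sub_zero, div_le_iff₀ hs.1]
    nlinarith [hs.1]
  have htend : Tendsto (slope φ 0) (𝓝[>] 0) (𝓝 ⟪G, y - X⟫) :=
    (hasDerivAt_iff_tendsto_slope.mp hφ').mono_left
      (nhdsWithin_mono _ fun z hz => ne_of_gt hz)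
  have hle : ⟪G, y - X⟫ ≤ g y - g X := by
    refine le_of_tendsto htend ?_
    filter_upwards [Ioc_mem_nhdsGT_of_mem (by norm_num : (0:ℝ) ∈ Set.Ico (0:ℝ) 1)] with s hs
    exact key s hs
  linarith

/-- dissipation inequality for the Lyapunov energy of the second-order
Tikhonov system. -/
theorem flow2_lyapunov_dissipation
    (f h : E → ℝ) (f' h' : E → E) (Lf Lh : ℝ≥0)
    (hf_conv : ConvexOn ℝ Set.univ f) (hh_conv : ConvexOn ℝ Set.univ h)
    (hf_grad : ∀ z, HasGradientAt f (f' z) z) (hh_grad : ∀ z, HasGradientAt h (h' z) z)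
    (hf_lip : LipschitzWith Lf f') (hh_lip : LipschitzWith Lh h')
    (hargmin : (argminSetR f).Nonempty) (hsol : (BilevelSolR f h).Nonempty)
    (t0 c δ : ℝ) (ht0 : 0 < t0) (hc : 0 < c) (hδ : 0 < δ)
    (ε : ℝ → ℝ) (hε : ∀ t : ℝ, ε t = c / t ^ δ)
    (α : ℝ) (hα : 3 < α)
    (x xd xdd : ℝ → E)
    (hx : ∀ t ∈ Set.Ici t0, HasDerivWithinAt x (xd t) (Set.Ici t0) t)
    (hxd : ∀ t ∈ Set.Ici t0, HasDerivWithinAt xd (xdd t) (Set.Ici t0) t)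
    (hxddcont : ContinuousOn xdd (Set.Ici t0))
    (hode : ∀ t ∈ Set.Ici t0, xdd t + (α / t) • xd t + f' (x t) + ε t • h' (x t) = 0)
    (xs : E) (hxs : xs ∈ BilevelSolR f h)
    (lam : ℝ) (hlam1 : 2 < lam) (hlam2 : lam < α - 1)
    (En : ℝ → ℝ)
    (hEn : ∀ t : ℝ, En t =
      t ^ 2 * (f (x t) + ε t * h (x t) - f xs - ε t * h xs) +
        1 / 2 * ‖lam • (x t - xs) + t • xd t‖ ^ 2 +
        lam * (α - 1 - lam) / 2 * ‖x t - xs‖ ^ 2)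
    (ζ : ℝ → ℝ) (hζ : ∀ t : ℝ, ζ t = t * (lam - 2) * ε t - t ^ 2 * deriv ε t) :
    ∀ t ∈ Set.Ici t0,
      derivWithin En (Set.Ici t0) t + ζ t * (h (x t) - h xs) +
          (α - 1 - lam) * t * ‖xd t‖ ^ 2 ≤
        -(t * (lam - 2) * (f (x t) - f xs)) := by
  intro t ht
  have htpos : 0 < t := lt_of_lt_of_le ht0 ht
  have htne : t ≠ 0 := ne_of_gt htpos
  -- derivative of ε
  have heps0 : ∀ τ : ℝ, 0 < τ → HasDerivAt ε (-(c * (δ * τ ^ (δ - 1))) / (τ ^ δ) ^ 2) τ := by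
    intro τ hτ
    have h1 : HasDerivAt (fun z : ℝ => z ^ δ) (δ * τ ^ (δ - 1)) τ :=
      Real.hasDerivAt_rpow_const (Or.inl (ne_of_gt hτ))
    have h2 := (hasDerivAt_const τ c).div h1 (ne_of_gt (Real.rpow_pos_of_pos hτ δ))
    have h3 : ((fun _ : ℝ => c) / fun z : ℝ => z ^ δ) = ε := by funext z; simp [hε]
    rw [h3] at h2
    convert h2 using 1
    exacts [rfl, rfl, by ring]
  have hederiv : deriv ε t = -(c * (δ * t ^ (δ - 1))) / (t ^ δ) ^ 2 := (heps0 t htpos).deriv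
  have hepsd : HasDerivAt ε (deriv ε t) t := by rw [hederiv]; exact heps0 t htpos
  have hepos : 0 < ε t := by rw [hε t]; exact div_pos hc (Real.rpow_pos_of_pos htpos δ)
  -- derivatives of x and compositions
  have hxt := hx t ht
  have hxdt := hxd t ht
  have hfx : HasDerivWithinAt (fun τ => f (x τ)) ⟪f' (x t), xd t⟫ (Set.Ici t0) t := by
    have h2 := (hf_grad (x t)).hasFDerivAt.comp_hasDerivWithinAt t hxt
    simpa [Function.comp_def, InnerProductSpace.toDual_apply_apply] using h2
  have hhx : HasDerivWithinAt (fun τ => h (x τ)) ⟪h' (x t), xd t⟫ (Set.Ici t0) t := by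
    have h2 := (hh_grad (x t)).hasFDerivAt.comp_hasDerivWithinAt t hxt
    simpa [Function.comp_def, InnerProductSpace.toDual_apply_apply] using h2
  have heA : HasDerivWithinAt
      (fun τ => f (x τ) + ε τ * h (x τ) - f xs - ε τ * h xs)
      (⟪f' (x t), xd t⟫ + (deriv ε t * h (x t) + ε t * ⟪h' (x t), xd t⟫) - deriv ε t * h xs)
      (Set.Ici t0) t := by
    have h1 := hepsd.hasDerivWithinAt.mul hhx
    have h2 := (hepsd.hasDerivWithinAt (s := Set.Ici t0)).mul_const (h xs)
    exact ((hfx.add h1).sub_const (f xs)).sub h2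
  have ht2 : HasDerivWithinAt (fun τ : ℝ => τ ^ 2) (2 * t) (Set.Ici t0) t := by
    simpa using (hasDerivAt_pow 2 t).hasDerivWithinAt
  have hT1 := ht2.mul heA
  -- the ODE, rearranged
  have hodet := hode t ht
  have hxdd_eq : xdd t = -((α / t) • xd t + (f' (x t) + ε t • h' (x t))) := by
    rw [add_assoc, add_assoc] at hodet
    exact eq_neg_of_add_eq_zero_left hodet
  have htw : t • xdd t = -(α • xd t + (t • f' (x t) + (t * ε t) • h' (x t))) := by
    have hcancel : t * (α / t) = α := by field_simp
    rw [hxdd_eq, smul_neg, smul_add, smul_smul, hcancel, smul_add, smul_smul]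
  -- derivative of v
  have hv : HasDerivWithinAt (fun τ => lam • (x τ - xs) + τ • xd τ)
      (lam • xd t + (t • xdd t + (1:ℝ) • xd t)) (Set.Ici t0) t :=
    ((hxt.sub_const xs).const_smul lam).add ((hasDerivWithinAt_id t (Set.Ici t0)).smul hxdt)
  rw [htw] at hv
  set w : E := lam • xd t + (-(α • xd t + (t • f' (x t) + (t * ε t) • h' (x t))) + (1:ℝ) • xd t)
    with hwdef
  set vt : E := lam • (x t - xs) + t • xd t with hvtdef
  -- rewrite En
  have hEnEq : En = fun τ => τ ^ 2 * (f (x τ) + ε τ * h (x τ) - f xs - ε τ * h xs) +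
      1 / 2 * ⟪lam • (x τ - xs) + τ • xd τ, lam • (x τ - xs) + τ • xd τ⟫ +
      lam * (α - 1 - lam) / 2 * ⟪x τ - xs, x τ - xs⟫ := by
    funext τ
    rw [hEn τ, real_inner_self_eq_norm_sq, real_inner_self_eq_norm_sq]
  have hq := (hxt.sub_const xs).inner (𝕜 := ℝ) (hxt.sub_const xs)
  have hvv := hv.inner (𝕜 := ℝ) hv
  have hEnD : HasDerivWithinAt En
      ((2 * t * (f (x t) + ε t * h (x t) - f xs - ε t * h xs) +
        t ^ 2 * (⟪f' (x t), xd t⟫ + (deriv ε t * h (x t) + ε t * ⟪h' (x t), xd t⟫) -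
          deriv ε t * h xs)) +
        1 / 2 * (⟪vt, w⟫ + ⟪w, vt⟫) +
        lam * (α - 1 - lam) / 2 * (⟪x t - xs, xd t⟫ + ⟪xd t, x t - xs⟫)) (Set.Ici t0) t := by
    rw [hEnEq]
    exact (hT1.add (hvv.const_mul (1 / 2))).add (hq.const_mul (lam * (α - 1 - lam) / 2))
  have hED := hEnD.derivWithin (uniqueDiffOn_Ici t0 t ht)
  rw [hED, hζ t]
  -- convexity inequalities
  have hcf := convex_grad_ineq hf_conv (hf_grad (x t)) xs
  have hch := convex_grad_ineq hh_conv (hh_grad (x t)) xs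
  rw [inner_sub_right] at hcf hch
  rw [real_inner_comm xs (f' (x t)), real_inner_comm (x t) (f' (x t))] at hcf
  rw [real_inner_comm xs (h' (x t)), real_inner_comm (x t) (h' (x t))] at hch
  have ha1 : f (x t) - f xs ≤ ⟪x t, f' (x t)⟫ - ⟪xs, f' (x t)⟫ := by linarith
  have ha2 : h (x t) - h xs ≤ ⟪x t, h' (x t)⟫ - ⟪xs, h' (x t)⟫ := by linarith
  have hltpos : 0 < lam * t := mul_pos (by linarith) htpos
  have hltepos : 0 < lam * t * ε t := mul_pos hltpos hepos
  have hint1 := mul_le_mul_of_nonneg_left ha1 hltpos.le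
  have hint2 := mul_le_mul_of_nonneg_left ha2 hltepos.le
  -- expand everything and close
  simp only [hwdef, hvtdef, inner_add_left, inner_add_right, inner_sub_left, inner_sub_right,
    inner_neg_left, inner_neg_right, real_inner_smul_left, real_inner_smul_right, one_smul,
    real_inner_self_eq_norm_sq]
  rw [real_inner_comm (xd t) (f' (x t)), real_inner_comm (xd t) (h' (x t)),
    real_inner_comm (x t) (xd t), real_inner_comm xs (xd t),
    real_inner_comm (x t) (f' (x t)), real_inner_comm xs (f' (x t)),
    real_inner_comm (x t) (h' (x t)), real_inner_comm xs (h' (x t))]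
  nlinarith [hint1, hint2]
end
end
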